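/- arXiv:1803.01519 — 9 statements merged into one kernel-verified Lean document; each statement's English description precedes it below -/
import Mathlib

section
/- Let F be a finite field, H a subset of F, and γ := ∑_{α∈H} α. Suppose the characteristic of F does not divide |H|. Then for every m-variate multilinear polynomial P over F (individual degree at most 1 in each variable), the sum of P over H^m equals P(γ/|H|, …, γ/|H|) · |H|^m. -/
open MvPolynomial Finset

/-- Multilinear summation over `H^m` when `char F` does not divide `|H|`. -/
theorem multilinear_sum_eq_center_eval
    {F : Type*} [Field F] [Fintype F] (H : Finset F) (hH : H.Nonempty)
    (m : ℕ) (hm : 0 < m)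
    (hchar : ¬ (ringChar F ∣ H.card))
    (P : MvPolynomial (Fin m) F) (hP : ∀ i, P.degreeOf i ≤ 1) :
    ∑ α ∈ Fintype.piFinset (fun _ : Fin m => H), MvPolynomial.eval α P
      = MvPolynomial.eval (fun _ : Fin m => (∑ a ∈ H, a) / (H.card : F)) P
          * (H.card : F) ^ m := by
  have hcard : (H.card : F) ≠ 0 := by
    rw [Ne, CharP.cast_eq_zero_iff F (ringChar F)]
    exact hchar
  set μ : F := (∑ a ∈ H, a) / (H.card : F) with hμ
  conv_lhs => rw [P.as_sum]
  conv_rhs => rw [P.as_sum]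
  rw [map_sum, Finset.sum_mul]
  simp only [map_sum]
  rw [Finset.sum_comm]
  refine Finset.sum_congr rfl fun d hd => ?_
  have hd1 : ∀ i, d i ≤ 1 := fun i => by
    refine le_trans ?_ (hP i)
    rw [MvPolynomial.degreeOf_eq_sup]
    exact Finset.le_sup (f := fun d => d i) hd
  simp only [MvPolynomial.eval_monomial]
  have hdp : ∀ (f : Fin m → F), (d.prod fun i n => f i ^ n) = ∏ i, f i ^ d i :=
    fun f => Finsupp.prod_fintype _ _ (fun i => pow_zero _)
  simp only [hdp]
  rw [← Finset.mul_sum, Finset.sum_prod_piFinset H (fun i a => a ^ d i)]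
  have hpc : (H.card : F) ^ m = ∏ _i : Fin m, (H.card : F) := by simp
  rw [mul_assoc, hpc, ← Finset.prod_mul_distrib]
  congr 1
  refine Finset.prod_congr rfl fun i _ => ?_
  rcases Nat.le_one_iff_eq_zero_or_eq_one.mp (hd1 i) with h | h <;> rw [h]
  · simp
  · simp only [pow_one, hμ]
    rw [div_mul_cancel₀ _ hcard]
end

section
/- Let F be a finite field, H a subset of F whose cardinality is divisible by the characteristic of F, and γ := ∑_{α∈H} α. Then for every m-variate multilinear polynomial P over F, the sum of P over H^m equals κ · γ^m, where κ is the coefficient of the monomial X_1⋯X_m in P. -/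
open MvPolynomial Finset

/-- Multilinear summation over `H^m` when `char F` divides `|H|`:
the sum equals the top coefficient `κ` (of `X_1 ⋯ X_m`) times `γ^m`,
where `γ = ∑_{α ∈ H} α`. -/
theorem multilinear_sum_eq_top_coeff_mul
    {F : Type*} [Field F] [Fintype F] (H : Finset F)
    (m : ℕ) (hm : 0 < m)
    (hchar : ringChar F ∣ H.card)
    (P : MvPolynomial (Fin m) F) (hP : ∀ i, P.degreeOf i ≤ 1) :
    ∑ α ∈ Fintype.piFinset (fun _ : Fin m => H), MvPolynomial.eval α P
      = P.coeff (∑ i : Fin m, Finsupp.single i 1) * (∑ a ∈ H, a) ^ m := by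
  have hcard : (H.card : F) = 0 :=
    (CharP.cast_eq_zero_iff F (ringChar F) H.card).mpr hchar
  set d1 : Fin m →₀ ℕ := ∑ i : Fin m, Finsupp.single i 1 with hd1
  have hd1app : ∀ j : Fin m, d1 j = 1 := by
    intro j
    simp [hd1, Finsupp.finset_sum_apply, Finsupp.single_apply]
  calc ∑ α ∈ Fintype.piFinset (fun _ : Fin m => H), MvPolynomial.eval α P
      = ∑ α ∈ Fintype.piFinset (fun _ : Fin m => H),
          ∑ d ∈ P.support, P.coeff d * ∏ i, α i ^ d i := by
        refine Finset.sum_congr rfl fun α _ => ?_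
        rw [eval_eq']
    _ = ∑ d ∈ P.support, P.coeff d * ∏ i, ∑ a ∈ H, a ^ d i := by
        rw [Finset.sum_comm]
        refine Finset.sum_congr rfl fun d _ => ?_
        rw [← Finset.mul_sum, Finset.prod_univ_sum]
    _ = P.coeff d1 * ∏ i : Fin m, ∑ a ∈ H, a ^ d1 i := by
        apply Finset.sum_eq_single
        · intro d hd hne
          have hle : ∀ j, d j ≤ 1 := fun j =>
            le_trans (MvPolynomial.monomial_le_degreeOf j hd) (hP j)
          obtain ⟨j, hj⟩ : ∃ j, d j ≠ 1 := by
            by_contra h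
            push_neg at h
            exact hne (Finsupp.ext fun j => by rw [h j, hd1app j])
          have hdj : d j = 0 := by have := hle j; omega
          have hz : (∑ a ∈ H, a ^ d j) = 0 := by
            simp [hdj, hcard]
          rw [Finset.prod_eq_zero (Finset.mem_univ j) hz, mul_zero]
        · intro hnot
          rw [MvPolynomial.notMem_support_iff.mp hnot, zero_mul]
    _ = P.coeff d1 * (∑ a ∈ H, a) ^ m := by
        congr 1
        have h1 : ∀ j ∈ Finset.univ, (∑ a ∈ H, a ^ d1 j) = ∑ a ∈ H, a :=
          fun j _ => by rw [hd1app j]; simp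
        rw [Finset.prod_congr rfl h1, Finset.prod_const, Finset.card_univ,
          Fintype.card_fin]
end

section
/- Let F be a field, H a finite additive subgroup of F, m, d positive integers with d = |H| − 1. For every v ∈ F^m and every m-variate polynomial P over F with individual degree at most d in each variable, ∑_{α∈H^m} P(α + v) = κ · a₀^m, where κ is the coefficient of X_1^{|H|−1}⋯X_m^{|H|−1} in P and a₀ is the coefficient of the linear term X in the subspace polynomial ∏_{h∈H}(X − h). -/
open MvPolynomial Finset

private lemma prodW_aux {F : Type*} [Field F] (H : AddSubgroup F) [Fintype H] [DecidableEq H]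
    (h : H) :
    ∏ j ∈ Finset.univ.erase h, ((h : F) - (j : F))
      = ∏ g ∈ Finset.univ.erase (0 : H), (g : F) := by
  refine Finset.prod_nbij' (fun j => h - j) (fun g => h - g) ?_ ?_ ?_ ?_ ?_
  · intro a ha
    simp only [mem_erase, mem_univ, and_true] at ha ⊢
    exact sub_ne_zero.mpr (Ne.symm ha)
  · intro a ha
    simp only [mem_erase, mem_univ, and_true] at ha ⊢
    intro hc
    apply ha
    rwa [sub_eq_self] at hc
  · intro a _; exact sub_sub_cancel h a
  · intro a _; exact sub_sub_cancel h a
  · intro a _; push_cast; ring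

private lemma key_sum_aux {F : Type*} [Field F] (H : AddSubgroup F) [Fintype H]
    (hn : 2 ≤ Fintype.card H) (c : F) (k : ℕ) (hk : k ≤ Fintype.card H - 1) :
    ∑ h : H, ((h : F) + c) ^ k
      = if k = Fintype.card H - 1
          then (∏ h : H, (Polynomial.X - Polynomial.C (h : F))).coeff 1 else 0 := by
  classical
  set n := Fintype.card H with hn'
  set w : F := ∏ g ∈ Finset.univ.erase (0 : H), (g : F) with hw
  have hwne : w ≠ 0 := by
    rw [hw]
    refine Finset.prod_ne_zero_iff.mpr fun g hg => ?_
    simp only [mem_erase, mem_univ, and_true] at hg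
    exact fun h0 => hg (Subtype.ext h0)
  set v : H → F := fun h => (h : F) + c with hv
  have hvs : Set.InjOn v (Finset.univ : Finset H) := by
    intro a _ b _ hab
    exact Subtype.ext (by simpa [hv] using hab)
  have hcard : (Finset.univ : Finset H).card = n := Finset.card_univ
  have hdeg : (Polynomial.X ^ k : Polynomial F).degree < (Finset.univ : Finset H).card := by
    rw [Polynomial.degree_X_pow, hcard]
    exact_mod_cast lt_of_le_of_lt hk (by omega)
  have hint := Lagrange.eq_interpolate hvs hdeg
  have hbasis : ∀ h : H, (Lagrange.basis Finset.univ v h).coeff (n - 1) = w⁻¹ := by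
    intro h
    rw [Lagrange.basis]
    simp only [Lagrange.basisDivisor]
    rw [Finset.prod_mul_distrib, ← map_prod, Polynomial.coeff_C_mul]
    have hmonic : (∏ j ∈ Finset.univ.erase h, (Polynomial.X - Polynomial.C (v j))).Monic :=
      Polynomial.monic_prod_of_monic _ _ fun j _ => Polynomial.monic_X_sub_C _
    have hnd : (∏ j ∈ Finset.univ.erase h, (Polynomial.X - Polynomial.C (v j))).natDegree
        = n - 1 := by
      rw [Polynomial.natDegree_prod_of_monic _ _ fun j _ => Polynomial.monic_X_sub_C _]
      simp [Finset.card_erase_of_mem, hcard]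
    have hc1 : (∏ j ∈ Finset.univ.erase h, (Polynomial.X - Polynomial.C (v j))).coeff (n-1)
        = (1 : F) := by rw [← hnd]; exact hmonic.coeff_natDegree
    rw [hc1, mul_one]
    have hpw : ∏ x ∈ Finset.univ.erase h, (v h - v x) = w := by
      rw [hw, ← prodW_aux H h]
      exact Finset.prod_congr rfl fun j _ => by simp [hv]
    rw [Finset.prod_inv_distrib, hpw]
  have hco := congrArg (fun p : Polynomial F => p.coeff (n - 1)) hint
  simp only [Lagrange.interpolate_apply, Polynomial.finset_sum_coeff, Polynomial.coeff_C_mul,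
    Polynomial.coeff_X_pow, Polynomial.eval_pow, Polynomial.eval_X] at hco
  simp only [hbasis] at hco
  rw [← Finset.sum_mul] at hco
  have hcoeff1 : (∏ h : H, (Polynomial.X - Polynomial.C (h : F))).coeff 1 = w := by
    rw [← Finset.mul_prod_erase (Finset.univ) _ (Finset.mem_univ (0 : H))]
    have h0 : ((0 : H) : F) = 0 := rfl
    rw [h0, Polynomial.C_0, sub_zero, Polynomial.coeff_X_mul,
      Polynomial.coeff_zero_eq_eval_zero, Polynomial.eval_prod]
    rw [hw, ← prodW_aux H 0]
    refine Finset.prod_congr rfl fun j hj => ?_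
    simp
  rw [hcoeff1]
  have : (∑ h : H, (v h) ^ k) = (if n - 1 = k then (1:F) else 0) * w := by
    rw [hco, inv_mul_cancel_right₀ hwne]
  rw [hv] at this
  simp only [this]
  by_cases hkk : k = n - 1 <;> simp [hkk, eq_comm]

/-- Shifted summation over a finite additive subgroup `H`:
for `P` of individual degree at most `d = |H|-1`,
`∑_{α ∈ H^m} P(α+v) = κ · a₀^m`, where `κ` is the coefficient of
`X_1^{|H|-1} ⋯ X_m^{|H|-1}` and `a₀` is the linear coefficient of
the subspace polynomial `∏_{h ∈ H} (X - h)`. -/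
theorem sum_over_add_subgroup_shifted
    {F : Type*} [Field F] (H : AddSubgroup F) [Fintype H]
    (m d : ℕ) (hm : 0 < m) (hdpos : 0 < d) (hd : d = Fintype.card H - 1)
    (v : Fin m → F)
    (P : MvPolynomial (Fin m) F) (hP : ∀ i, P.degreeOf i ≤ d) :
    ∑ α : Fin m → H, MvPolynomial.eval (fun i => (α i : F) + v i) P
      = P.coeff (∑ i : Fin m, Finsupp.single i (Fintype.card H - 1))
          * ((∏ h : H, (Polynomial.X - Polynomial.C (h : F))).coeff 1) ^ m := by
  classical
  set n := Fintype.card H with hn'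
  have hnpos : 0 < n := Fintype.card_pos
  have hn2 : 2 ≤ n := by omega
  set a1 : F := (∏ h : H, (Polynomial.X - Polynomial.C (h : F))).coeff 1 with ha1
  set T : Fin m →₀ ℕ := ∑ i : Fin m, Finsupp.single i (n - 1) with hTdef
  have hT : ∀ j, T j = n - 1 := by
    intro j
    rw [hTdef, Finsupp.finset_sum_apply]
    rw [Finset.sum_eq_single j]
    · rw [Finsupp.single_apply, if_pos rfl]
    · intro b _ hb
      rw [Finsupp.single_apply, if_neg hb]
    · intro hj
      exact absurd (Finset.mem_univ j) hj
  have expand : ∀ α : Fin m → H, MvPolynomial.eval (fun i => (α i : F) + v i) P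
      = ∑ t ∈ P.support, P.coeff t * ∏ i, ((α i : F) + v i) ^ t i :=
    fun α => MvPolynomial.eval_eq' _ _
  simp_rw [expand]
  rw [Finset.sum_comm]
  have step : ∀ t ∈ P.support,
      (∑ α : Fin m → H, P.coeff t * ∏ i, ((α i : F) + v i) ^ t i)
        = if t = T then P.coeff T * a1 ^ m else 0 := by
    intro t ht
    rw [← Finset.mul_sum, ← Fintype.prod_sum (fun i (h : H) => ((h : F) + v i) ^ t i)]
    have hkey : ∀ i, (∑ h : H, ((h : F) + v i) ^ t i) = if t i = n - 1 then a1 else 0 := by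
      intro i
      apply key_sum_aux H hn2
      have h1 : t i ≤ P.degreeOf i := by
        rw [MvPolynomial.degreeOf_eq_sup]
        exact Finset.le_sup (f := fun t : Fin m →₀ ℕ => t i) ht
      have h2 := hP i
      omega
    simp_rw [hkey]
    by_cases hTt : t = T
    · subst hTt
      simp [hT, Finset.prod_const]
    · have : ∃ i, t i ≠ n - 1 := by
        by_contra hco
        push_neg at hco
        exact hTt (Finsupp.ext fun i => by rw [hco i, hT i])
      obtain ⟨i, hi⟩ := this
      rw [Finset.prod_eq_zero (Finset.mem_univ i) (by simp [hi]), mul_zero, if_neg hTt]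
  rw [Finset.sum_congr rfl step]
  rw [Finset.sum_ite_eq' P.support T (fun _ => P.coeff T * a1 ^ m)]
  by_cases hTs : T ∈ P.support
  · rw [if_pos hTs]
  · rw [if_neg hTs, MvPolynomial.notMem_support_iff.mp hTs, zero_mul]
end

section
/- Let F be a field, H a finite additive subgroup of F, and P an m-variate polynomial over F with individual degree at most |H|−1 in each variable and total degree strictly less than m(|H|−1). Then for every shift v ∈ F^m, the sum ∑_{α∈H^m} P(α + v) equals 0. -/
/-!
Lagrange interpolation on the nodes `H` gives, for `deg f < |H|`, the coefficient of `X^(|H|-1)`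
in `f` as `∑_{a ∈ H} f(a) / ∏_{b ≠ a} (a - b)`. Since `H` is a group, the denominator is
`∏_{c ∈ H, c ≠ 0} c` for every `a`, so `∑_{a ∈ H} f(a) = 0` whenever `deg f < |H| - 1`.
Expanding `P` into monomials turns the sum over `H^m` into products of the one-variable sums
`∑_{a ∈ H} (a + v i)^(d i)`, and the bound on the total degree forces `d i < |H| - 1` for some `i`.
-/

open MvPolynomial Finset

namespace AddSubgroup

variable {F : Type*} [Field F] (H : AddSubgroup F) [Fintype H]

theorem prod_erase_sub_eq_prod_erase_zero [DecidableEq H] (a : H) :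
    ∏ b ∈ univ.erase a, ((a : F) - b) = ∏ c ∈ univ.erase (0 : H), (c : F) :=
  prod_nbij' (a - ·) (a - ·) (by simp [sub_eq_zero, eq_comm]) (by simp)
    (by simp) (by simp) (by simp)

theorem sum_eval_eq_zero_of_natDegree_lt {f : Polynomial F}
    (hf : f.natDegree < Fintype.card H - 1) :
    ∑ a : H, f.eval (a : F) = 0 := by
  classical
  have hdeg : f.degree < (#(univ : Finset H) : ℕ) :=
    Polynomial.degree_le_natDegree.trans_lt (by simpa using hf.trans_le (Nat.sub_le _ _))
  have hcoeff := Lagrange.coeff_eq_sum Subtype.val_injective.injOn hdeg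
  simp only [prod_erase_sub_eq_prod_erase_zero, ← sum_div, card_univ,
    Polynomial.coeff_eq_zero_of_natDegree_lt hf, eq_comm (a := (0 : F)), div_eq_zero_iff] at hcoeff
  refine hcoeff.resolve_right (prod_ne_zero_iff.mpr fun c hc => ?_)
  simpa using (mem_erase.mp hc).1

end AddSubgroup

namespace MvPolynomial

theorem sum_eval_pi_eq_sum_support {σ S R : Type*} [Fintype σ] [DecidableEq σ] [Fintype S]
    [CommSemiring R] (P : MvPolynomial σ R) (g : σ → S → R) :
    ∑ α : σ → S, eval (fun i => g i (α i)) P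
      = ∑ d ∈ P.support, P.coeff d * ∏ i, ∑ a, g i a ^ d i := by
  simp only [eval_eq', Fintype.prod_sum, mul_sum]
  exact sum_comm

theorem exists_lt_of_mem_support_of_totalDegree_lt {σ R : Type*} [Fintype σ] [CommSemiring R]
    {P : MvPolynomial σ R} {k : ℕ} (htot : P.totalDegree < Fintype.card σ * k)
    {d : σ →₀ ℕ} (hd : d ∈ P.support) : ∃ i, d i < k := by
  have hsum : ∑ i, d i < ∑ _i : σ, k := by
    simpa [← Finsupp.sum_fintype d (fun _ e => e) fun _ => rfl] using
      (le_totalDegree hd).trans_lt htot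
  simpa using exists_lt_of_sum_lt hsum

end MvPolynomial

theorem sum_over_add_subgroup_shifted_eq_zero_general
    {F : Type*} [Field F] (H : AddSubgroup F) [Fintype H]
    (m : ℕ)
    (P : MvPolynomial (Fin m) F)
    (htot : P.totalDegree < m * (Fintype.card H - 1))
    (v : Fin m → F) :
    ∑ α : Fin m → H, MvPolynomial.eval (fun i => (α i : F) + v i) P = 0 := by
  rw [sum_eval_pi_eq_sum_support P (fun i (a : H) => (a : F) + v i)]
  refine sum_eq_zero fun d hd => ?_
  obtain ⟨i, hi⟩ := exists_lt_of_mem_support_of_totalDegree_lt (by simpa using htot) hd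
  have hfactor : ∑ a : H, ((a : F) + v i) ^ d i = 0 := by
    have := H.sum_eval_eq_zero_of_natDegree_lt
      (f := (Polynomial.X + Polynomial.C (v i)) ^ d i) (by simpa using hi)
    simpa only [Polynomial.eval_pow, Polynomial.eval_add, Polynomial.eval_X, Polynomial.eval_C]
      using this
  rw [prod_eq_zero (mem_univ i) hfactor, mul_zero]

/-- Shifted summation over a finite additive subgroup `H`: if `P` has
individual degree at most `|H|-1` in each variable and total degree
strictly less than `m(|H|-1)`, the sum of `P(α+v)` over `α ∈ H^m` is `0`. -/
theorem sum_over_add_subgroup_shifted_eq_zero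
    {F : Type*} [Field F] (H : AddSubgroup F) [Fintype H]
    (m : ℕ) (hm : 0 < m)
    (P : MvPolynomial (Fin m) F)
    (hP : ∀ i, P.degreeOf i ≤ Fintype.card H - 1)
    (htot : P.totalDegree < m * (Fintype.card H - 1))
    (v : Fin m → F) :
    ∑ α : Fin m → H, MvPolynomial.eval (fun i => (α i : F) + v i) P = 0 :=
  sum_over_add_subgroup_shifted_eq_zero_general H m P htot v
end

section
/- Let F be a field, H a finite additive subgroup of F with |H| ≥ 2, and v ∈ F. For every univariate polynomial P over F of degree at most |H|−1, writing P(X) = ∑_{j=0}^{|H|−1} β_j X^j, it holds that ∑_{α∈H} P(α + v) = β_{|H|−1} · a₀, where a₀ is the coefficient of X in ∏_{h∈H}(X − h). -/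
open Finset Polynomial

/-- Univariate base case of the additive-subgroup summation lemma:
for `P` of degree at most `|H|-1`,
`∑_{α ∈ H} P(α+v) = β_{|H|-1} · a₀`, where `a₀` is the coefficient of `X`
in the vanishing polynomial `∏_{h ∈ H} (X - h)`. -/
theorem univariate_sum_over_add_subgroup_shifted
    {F : Type*} [Field F] (H : AddSubgroup F) [Fintype H]
    (hH : 2 ≤ Fintype.card H) (v : F)
    (P : Polynomial F) (hP : P.natDegree ≤ Fintype.card H - 1) :
    ∑ α : H, P.eval ((α : F) + v)
      = P.coeff (Fintype.card H - 1)
          * (∏ h : H, (Polynomial.X - Polynomial.C (h : F))).coeff 1 := by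
  classical
  set q := Fintype.card H with hq
  set n := q - 1 with hn
  have hn1 : n + 1 = q := by omega
  set c : F := ∏ γ ∈ (univ : Finset H).erase 0, (γ : F) with hc
  -- the product ∏_{β ≠ α} (α - β) is independent of α
  have hprod : ∀ α : H, ∏ β ∈ (univ : Finset H).erase α, ((α : F) - (β : F)) = c := by
    intro α
    rw [hc]
    refine prod_nbij' (fun β => α - β) (fun γ => α - γ) ?_ ?_ ?_ ?_ ?_
    · intro β hβ
      simp only [mem_erase, mem_univ, and_true] at hβ ⊢
      rw [sub_ne_zero]
      exact fun h => hβ h.symm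
    · intro γ hγ
      simp only [mem_erase, mem_univ, and_true] at hγ ⊢
      rw [Ne, sub_eq_self]
      exact hγ
    · intro β _; simp [sub_sub_cancel]
    · intro γ _; simp [sub_sub_cancel]
    · intro β _; simp
  -- the shifted polynomial
  set Q : Polynomial F := P.comp (Polynomial.X + Polynomial.C v) with hQdef
  have hQdeg : Q.natDegree ≤ n := by
    rw [hQdef, natDegree_comp, natDegree_X_add_C, mul_one]; exact hP
  have hQeval : ∀ α : F, Q.eval α = P.eval (α + v) := by
    intro α; simp [hQdef]
  have hQcoeff : Q.coeff n = P.coeff n := by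
    rcases lt_or_eq_of_le hP with h | h
    · rw [coeff_eq_zero_of_natDegree_lt (by rwa [hQdef, natDegree_comp, natDegree_X_add_C, mul_one]),
        coeff_eq_zero_of_natDegree_lt h]
    · have hQn : Q.natDegree = n := by
        rw [hQdef, natDegree_comp, natDegree_X_add_C, mul_one]; exact h
      have : Q.coeff n = Q.leadingCoeff := by rw [leadingCoeff, hQn]
      rw [this, hQdef, leadingCoeff_comp (by rw [natDegree_X_add_C]; exact one_ne_zero)]
      rw [(monic_X_add_C v).leadingCoeff, one_pow, leadingCoeff, h, mul_one]
  -- interpolation-style polynomial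
  set R : Polynomial F := ∑ α : H, Polynomial.C (Q.eval (α : F)) *
      ∏ β ∈ (univ : Finset H).erase α, (Polynomial.X - Polynomial.C (β : F)) with hRdef
  have hcard_erase : ∀ α : H, #((univ : Finset H).erase α) = n := by
    intro α; rw [card_erase_of_mem (mem_univ α), card_univ]
  have hmonic : ∀ α : H, (∏ β ∈ (univ : Finset H).erase α,
      (Polynomial.X - Polynomial.C (β : F))).Monic :=
    fun α => monic_prod_of_monic _ _ fun β _ => monic_X_sub_C _
  have hdegprod : ∀ α : H, (∏ β ∈ (univ : Finset H).erase α,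
      (Polynomial.X - Polynomial.C (β : F))).natDegree = n := by
    intro α
    rw [natDegree_prod_of_monic _ _ fun β _ => monic_X_sub_C _]
    simp [hcard_erase α]
  -- main identity : C c * Q = R
  have hmain : Polynomial.C c * Q = R := by
    have hDz : Polynomial.C c * Q - R = 0 := by
      apply eq_zero_of_natDegree_lt_card_of_eval_eq_zero _
        (Subtype.val_injective : Function.Injective ((↑) : H → F))
      · intro α
        have hReval : R.eval (α : F) = Q.eval (α : F) * c := by
          rw [hRdef]
          rw [eval_finset_sum]
          rw [Finset.sum_eq_single α]
          · simp only [eval_mul, eval_C, eval_prod, eval_sub, eval_X]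
            rw [hprod α]
          · intro b _ hb
            have : (α : H) ∈ (univ : Finset H).erase b := by simp [Ne.symm, hb]
            simp only [eval_mul, eval_C, eval_prod, eval_sub, eval_X]
            rw [Finset.prod_eq_zero this (by simp)]
            ring
          · simp
        simp [hReval]; ring
      · have h1 : (Polynomial.C c * Q).natDegree ≤ n := le_trans (natDegree_mul_le)
          (by simp [natDegree_C, hQdeg])
        have h2 : R.natDegree ≤ n := by
          rw [hRdef]
          apply natDegree_sum_le_of_forall_le
          intro α _
          exact le_trans natDegree_mul_le (by simp [natDegree_C, hdegprod α])
        calc (Polynomial.C c * Q - R).natDegree ≤ max _ _ := natDegree_sub_le _ _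
          _ ≤ n := max_le h1 h2
          _ < q := by omega
    exact sub_eq_zero.mp hDz
  -- coefficient 1 of the vanishing polynomial equals c
  have hZ : (∏ h : H, (Polynomial.X - Polynomial.C (h : F))).coeff 1 = c := by
    rw [← Finset.mul_prod_erase (univ : Finset H) _ (mem_univ (0 : H))]
    simp only [ZeroMemClass.coe_zero, map_zero, sub_zero]
    rw [coeff_X_mul, coeff_zero_eq_eval_zero, eval_prod]
    simpa using hprod 0
  -- compare coefficients at degree n
  have hcoeffn : c * Q.coeff n = ∑ α : H, Q.eval (α : F) := by
    have h := congrArg (fun p => Polynomial.coeff p n) hmain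
    simp only [coeff_C_mul, hRdef, finset_sum_coeff] at h
    rw [h]
    apply Finset.sum_congr rfl
    intro α _
    have : (∏ β ∈ (univ : Finset H).erase α,
        (Polynomial.X - Polynomial.C (β : F))).coeff n = 1 := by
      conv_lhs => rw [← hdegprod α]
      exact (hmonic α).coeff_natDegree
    rw [this, mul_one]
  have hsum : ∑ α : H, P.eval ((α : F) + v) = ∑ α : H, Q.eval (α : F) := by
    simp [hQeval]
  rw [hsum, ← hcoeffn, hQcoeff, hZ, mul_comm]
end

section
/- Let F be a field, G, K, L finite subsets of F with K ⊆ L, let m, k, d, d' be integers with d' ≥ |G| − 2 and |K| = d + 1, and let V ⊆ F[X_1,…,X_m,Y_1,…,Y_k] be the space of polynomials with individual degree at most d in each X-variable and at most d' in each Y-variable. Suppose S ⊆ F^{m+k} and matrices C ∈ F^{L^m × ℓ}, D ∈ F^{S × ℓ} satisfy, for all Z ∈ V and all i ∈ {1,…,ℓ}: ∑_{α∈L^m} C_{α,i} ∑_{y∈G^k} Z(α,y) = ∑_{q∈S} D_{q,i} Z(q). Then |S| ≥ rank(BC) · (min{d' − |G| + 2, |G|})^k, where B ∈ F^{K^m ×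 L^m} is the matrix expressing, for each α ∈ L^m, the evaluation functional Z ↦ Z(α) as a linear combination of the functionals Z ↦ Z(β) for β ∈ K^m (in the X-variables). -/
open MvPolynomial Finset


open MvPolynomial Finset

namespace AQCAux

variable {F : Type*} [Field F] [DecidableEq F]

/-- Scalar Lagrange basis factor. -/
noncomputable def lagval (s : Finset F) (b a : F) : F :=
  ∏ c ∈ s.erase b, ((b - c)⁻¹ * (a - c))

lemma lagval_self (s : Finset F) (b : F) : lagval s b b = 1 := by
  apply Finset.prod_eq_one
  intro c hc
  have hbc : b - c ≠ 0 := sub_ne_zero.mpr (Finset.ne_of_mem_erase hc).symm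
  exact inv_mul_cancel₀ hbc

lemma lagval_of_ne (s : Finset F) {b a : F} (ha : a ∈ s) (hab : a ≠ b) :
    lagval s b a = 0 := by
  apply Finset.prod_eq_zero (Finset.mem_erase.mpr ⟨hab, ha⟩)
  simp

lemma lagval_delta (s : Finset F) {a b : F} (ha : a ∈ s) :
    lagval s b a = if a = b then 1 else 0 := by
  split
  · next h => rw [h]; exact lagval_self _ _
  · next h => exact lagval_of_ne _ ha h

/-- Multivariate Lagrange basis factor in variable `v`. -/
noncomputable def lagP {σ : Type*} (v : σ) (s : Finset F) (b : F) : MvPolynomial σ F :=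
  ∏ c ∈ s.erase b, (C ((b - c)⁻¹) * (X v - C c))

lemma eval_lagP {σ : Type*} (v : σ) (s : Finset F) (b : F) (x : σ → F) :
    eval x (lagP v s b) = lagval s b (x v) := by
  simp [lagP, lagval]

lemma degreeOf_lagP_le {σ : Type*} [DecidableEq σ] (w v : σ) (s : Finset F) {b : F}
    (hb : b ∈ s) :
    degreeOf w (lagP v s b) ≤ if w = v then s.card - 1 else 0 := by
  refine (degreeOf_prod_le _ _ _).trans ?_
  have h1 : ∀ c ∈ s.erase b,
      degreeOf w (C ((b - c)⁻¹) * (X v - C c) : MvPolynomial σ F) ≤ if w = v then 1 else 0 := by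
    intro c _
    refine (degreeOf_mul_le _ _ _).trans ?_
    rw [degreeOf_C, zero_add, sub_eq_add_neg, ← C_neg]
    refine (degreeOf_add_le _ _ _).trans ?_
    rw [degreeOf_C, degreeOf_X]
    simp
  calc ∑ c ∈ s.erase b, degreeOf w (C ((b - c)⁻¹) * (X v - C c) : MvPolynomial σ F)
      ≤ ∑ _c ∈ s.erase b, (if w = v then 1 else 0) := Finset.sum_le_sum h1
    _ = (s.erase b).card * (if w = v then 1 else 0) := by rw [Finset.sum_const, smul_eq_mul]
    _ ≤ if w = v then s.card - 1 else 0 := by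
        rw [Finset.card_erase_of_mem hb]
        split <;> simp

lemma card_mul_rank_le_rank_blockDiagonal {N M ι : Type*} [Fintype N] [Fintype M] [Fintype ι]
    [DecidableEq ι] (A : Matrix N M F) :
    Fintype.card ι * A.rank ≤ (Matrix.blockDiagonal (fun _ : ι => A)).rank := by
  classical
  set V := LinearMap.range A.mulVecLin with hV
  let Ψ : (ι → V) →ₗ[F] (N × ι → F) :=
    { toFun := fun f p => (f p.2 : N → F) p.1
      map_add' := by intro f g; funext p; rfl
      map_smul' := by intro c f; funext p; rfl }
  have hinj : Function.Injective Ψ := by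
    intro f g hfg
    funext gg
    ext i
    exact congrFun hfg (i, gg)
  have hle : LinearMap.range Ψ ≤
      LinearMap.range (Matrix.blockDiagonal (fun _ : ι => A)).mulVecLin := by
    rintro w ⟨f, rfl⟩
    choose v hv using fun g => (f g).2
    refine ⟨fun p => v p.2 p.1, ?_⟩
    funext p
    obtain ⟨i, g⟩ := p
    show (Matrix.blockDiagonal (fun _ : ι => A)).mulVec (fun p => v p.2 p.1) (i, g) = _
    simp only [Matrix.mulVec, dotProduct]
    rw [Fintype.sum_prod_type]
    have : ∀ β : M, ∑ h : ι,
        Matrix.blockDiagonal (fun _ : ι => A) (i, g) (β, h) * v h β = A i β * v g β := by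
      intro β
      simp [Matrix.blockDiagonal_apply]
    rw [Finset.sum_congr rfl (fun β _ => this β)]
    have := congrFun (hv g) i
    exact this
  have h1 : Module.finrank F (ι → V) = Fintype.card ι * A.rank := by
    rw [Module.finrank_pi_fintype, Finset.sum_const, smul_eq_mul, Finset.card_univ]
    rfl
  have h2 : Module.finrank F (ι → V) = Module.finrank F (LinearMap.range Ψ) :=
    (LinearEquiv.ofInjective Ψ hinj).finrank_eq
  have h3 : Module.finrank F (LinearMap.range Ψ) ≤
      Module.finrank F (LinearMap.range (Matrix.blockDiagonal (fun _ : ι => A)).mulVecLin) :=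
    Submodule.finrank_mono hle
  rw [← h1] at *
  exact h2 ▸ h3 |>.trans_eq rfl


end AQCAux

open AQCAux


/-- Algebraic query complexity lower bound for polynomial summation
(general form, with the change-of-basis matrix `B` from `L^m` to `K^m`):
if every linear combination (given by `C`) of the partial sums
`∑_{y ∈ G^k} Z(α,y)`, `α ∈ L^m`, is computable as a linear combination
(given by `D`) of evaluations of `Z` at the points of `S`, for all `Z` of
individual degree `≤ d` in the `X`-variables and `≤ d'` in the
`Y`-variables, then `|S| ≥ rank(BC) · (min(d' - |G| + 2, |G|))^k`. -/
theorem algebraic_query_complexity_sum_lower_bound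
    {F : Type*} [Field F] [DecidableEq F]
    (G K L : Finset F) (hKL : K ⊆ L)
    (m k d d' ℓ : ℕ)
    (hd' : G.card ≤ d' + 2) (hK : K.card = d + 1)
    (S : Finset ((Fin m → F) × (Fin k → F)))
    (C : (Fin m → F) → Fin ℓ → F)
    (D : ((Fin m → F) × (Fin k → F)) → Fin ℓ → F)
    (B : (Fin m → F) → (Fin m → F) → F)
    (hB : ∀ Z : MvPolynomial (Fin m ⊕ Fin k) F,
        (∀ i, Z.degreeOf (Sum.inl i) ≤ d) → (∀ j, Z.degreeOf (Sum.inr j) ≤ d') →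
        ∀ α ∈ Fintype.piFinset (fun _ : Fin m => L), ∀ y : Fin k → F,
          MvPolynomial.eval (Sum.elim α y) Z
            = ∑ β ∈ Fintype.piFinset (fun _ : Fin m => K),
                B β α * MvPolynomial.eval (Sum.elim β y) Z)
    (hmain : ∀ Z : MvPolynomial (Fin m ⊕ Fin k) F,
        (∀ i, Z.degreeOf (Sum.inl i) ≤ d) → (∀ j, Z.degreeOf (Sum.inr j) ≤ d') →
        ∀ i : Fin ℓ,
          ∑ α ∈ Fintype.piFinset (fun _ : Fin m => L),
            C α i * ∑ y ∈ Fintype.piFinset (fun _ : Fin k => G),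
              MvPolynomial.eval (Sum.elim α y) Z
          = ∑ q ∈ S, D q i * MvPolynomial.eval (Sum.elim q.1 q.2) Z) :
    (Matrix.of (fun (β : Fin m → {x // x ∈ K}) (i : Fin ℓ) =>
        ∑ α ∈ Fintype.piFinset (fun _ : Fin m => L),
          B (fun j => (β j : F)) α * C α i)).rank
      * (min (d' + 2 - G.card) G.card) ^ k ≤ S.card := by
  classical
  set t := min (d' + 2 - G.card) G.card with htdef
  by_cases htriv : t = 0 ∧ k ≠ 0
  · rw [htriv.1, zero_pow htriv.2, Nat.mul_zero]
    exact Nat.zero_le _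
  have hcase : k = 0 ∨ 1 ≤ t := by
    rcases Nat.eq_zero_or_pos t with h | h
    · by_cases hk : k = 0
      · exact Or.inl hk
      · exact absurd ⟨h, hk⟩ htriv
    · exact Or.inr h
  have htle : t ≤ d' + 2 - G.card := min_le_left _ _
  have htG : t ≤ G.card := min_le_right _ _
  obtain ⟨W, hWG, hWcard⟩ := Finset.exists_subset_card_eq htG
  set Kt := (Fin m → {x // x ∈ K}) with hKt
  set ι := (Fin k → {x // x ∈ W}) with hι
  set M : Matrix Kt (Fin ℓ) F := Matrix.of (fun (β : Fin m → {x // x ∈ K}) (i : Fin ℓ) =>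
        ∑ α ∈ Fintype.piFinset (fun _ : Fin m => L),
          B (fun j => (β j : F)) α * C α i) with hM
  show M.rank * t ^ k ≤ S.card
  -- the test polynomials
  set U : Kt → MvPolynomial (Fin m ⊕ Fin k) F :=
    fun β => ∏ j, lagP (Sum.inl j) K ((β j : F)) with hU
  set Vp : ι → MvPolynomial (Fin m ⊕ Fin k) F :=
    fun h => ∏ j, lagP (Sum.inr j) W ((h j : F)) with hVp
  set Δ : ι → MvPolynomial (Fin m ⊕ Fin k) F :=
    fun g => ∏ j, lagP (Sum.inr j) G ((g j : F)) with hΔ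
  -- degree bounds
  have hdegX : ∀ (β : Kt) (h g : ι) (i : Fin m),
      degreeOf (Sum.inl i) (U β * (Vp h * Δ g)) ≤ d := by
    intro β h g i
    refine (degreeOf_mul_le _ _ _).trans ?_
    have h1 : degreeOf (Sum.inl i) (U β) ≤ d := by
      refine (degreeOf_prod_le _ _ _).trans ?_
      have : ∀ j ∈ Finset.univ, degreeOf (Sum.inl i : Fin m ⊕ Fin k)
          (lagP (Sum.inl j) K ((β j : F)))
          ≤ if (Sum.inl i : Fin m ⊕ Fin k) = Sum.inl j then K.card - 1 else 0 :=
        fun j _ => degreeOf_lagP_le _ _ _ (β j).2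
      refine (Finset.sum_le_sum this).trans ?_
      simp [Sum.inl.injEq, hK]
    have h2 : degreeOf (Sum.inl i) (Vp h) ≤ 0 := by
      refine (degreeOf_prod_le _ _ _).trans ?_
      have : ∀ j ∈ Finset.univ, degreeOf (Sum.inl i : Fin m ⊕ Fin k)
          (lagP (Sum.inr j) W ((h j : F)))
          ≤ if (Sum.inl i : Fin m ⊕ Fin k) = Sum.inr j then W.card - 1 else 0 :=
        fun j _ => degreeOf_lagP_le _ _ _ (h j).2
      refine (Finset.sum_le_sum this).trans ?_
      simp
    have h3 : degreeOf (Sum.inl i) (Δ g) ≤ 0 := by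
      refine (degreeOf_prod_le _ _ _).trans ?_
      have : ∀ j ∈ Finset.univ, degreeOf (Sum.inl i : Fin m ⊕ Fin k)
          (lagP (Sum.inr j) G ((g j : F)))
          ≤ if (Sum.inl i : Fin m ⊕ Fin k) = Sum.inr j then G.card - 1 else 0 :=
        fun j _ => degreeOf_lagP_le _ _ _ (hWG (g j).2)
      refine (Finset.sum_le_sum this).trans ?_
      simp
    have h4 := (degreeOf_mul_le (Sum.inl i) (Vp h) (Δ g)).trans (Nat.add_le_add h2 h3)
    omega
  have hdegY : ∀ (β : Kt) (h g : ι) (j : Fin k),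
      degreeOf (Sum.inr j) (U β * (Vp h * Δ g)) ≤ d' := by
    intro β h g j
    have hk1 : 1 ≤ t := by
      rcases hcase with hc | hc
      · exact absurd (hc ▸ j.pos) (lt_irrefl 0)
      · exact hc
    refine (degreeOf_mul_le _ _ _).trans ?_
    have h1 : degreeOf (Sum.inr j) (U β) ≤ 0 := by
      refine (degreeOf_prod_le _ _ _).trans ?_
      have : ∀ j' ∈ Finset.univ, degreeOf (Sum.inr j : Fin m ⊕ Fin k)
          (lagP (Sum.inl j') K ((β j' : F)))
          ≤ if (Sum.inr j : Fin m ⊕ Fin k) = Sum.inl j' then K.card - 1 else 0 :=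
        fun j' _ => degreeOf_lagP_le _ _ _ (β j').2
      refine (Finset.sum_le_sum this).trans ?_
      simp
    have h2 : degreeOf (Sum.inr j) (Vp h) ≤ W.card - 1 := by
      refine (degreeOf_prod_le _ _ _).trans ?_
      have : ∀ j' ∈ Finset.univ, degreeOf (Sum.inr j : Fin m ⊕ Fin k)
          (lagP (Sum.inr j') W ((h j' : F)))
          ≤ if (Sum.inr j : Fin m ⊕ Fin k) = Sum.inr j' then W.card - 1 else 0 :=
        fun j' _ => degreeOf_lagP_le _ _ _ (h j').2
      refine (Finset.sum_le_sum this).trans ?_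
      simp [Sum.inr.injEq]
    have h3 : degreeOf (Sum.inr j) (Δ g) ≤ G.card - 1 := by
      refine (degreeOf_prod_le _ _ _).trans ?_
      have : ∀ j' ∈ Finset.univ, degreeOf (Sum.inr j : Fin m ⊕ Fin k)
          (lagP (Sum.inr j') G ((g j' : F)))
          ≤ if (Sum.inr j : Fin m ⊕ Fin k) = Sum.inr j' then G.card - 1 else 0 :=
        fun j' _ => degreeOf_lagP_le _ _ _ (hWG (g j').2)
      refine (Finset.sum_le_sum this).trans ?_
      simp [Sum.inr.injEq]
    have h4 := (degreeOf_mul_le (Sum.inr j) (Vp h) (Δ g)).trans (Nat.add_le_add h2 h3)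
    rw [hWcard] at h4
    omega
  -- evaluation of the test polynomials
  have hevalZ : ∀ (β : Kt) (h g : ι) (x : Fin m → F) (y : Fin k → F),
      eval (Sum.elim x y) (U β * (Vp h * Δ g))
        = (∏ j, lagval K ((β j : F)) (x j)) *
          ((∏ j, lagval W ((h j : F)) (y j)) * (∏ j, lagval G ((g j : F)) (y j))) := by
    intro β h g x y
    simp [hU, hVp, hΔ, eval_lagP]
  -- Kronecker delta facts
  have hUdelta : ∀ (β : Kt) (x : Fin m → F), x ∈ Fintype.piFinset (fun _ : Fin m => K) →
      (∏ j, lagval K ((β j : F)) (x j)) = if x = (fun j => (β j : F)) then 1 else 0 := by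
    intro β x hx
    by_cases hxe : x = fun j => (β j : F)
    · rw [if_pos hxe, hxe]
      exact Finset.prod_eq_one fun j _ => lagval_self K _
    · rw [if_neg hxe]
      obtain ⟨j, hj⟩ := Function.ne_iff.mp hxe
      exact Finset.prod_eq_zero (Finset.mem_univ j)
        (lagval_of_ne K (Fintype.mem_piFinset.mp hx j) hj)
  have hWdelta : ∀ (h g : ι),
      (∏ j, lagval W ((h j : F)) ((g j : F))) = if g = h then 1 else 0 := by
    intro h g
    by_cases hgh : g = h
    · rw [if_pos hgh, hgh]
      exact Finset.prod_eq_one fun j _ => lagval_self W _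
    · rw [if_neg hgh]
      obtain ⟨j, hj⟩ := Function.ne_iff.mp hgh
      refine Finset.prod_eq_zero (Finset.mem_univ j) (lagval_of_ne W (g j).2 ?_)
      exact fun hc => hj (Subtype.ext hc)
  have hGsum : ∀ (h g : ι) (j : Fin k),
      ∑ c ∈ G, lagval W ((h j : F)) c * lagval G ((g j : F)) c
        = lagval W ((h j : F)) ((g j : F)) := by
    intro h g j
    rw [Finset.sum_eq_single_of_mem ((g j : F)) (hWG (g j).2)]
    · rw [lagval_self, mul_one]
    · intro c hc hcne
      rw [lagval_of_ne G hc hcne, mul_zero]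
  -- key partial-sum computation
  have hSy : ∀ (β : Kt) (h g : ι) (x : Fin m → F),
      ∑ y ∈ Fintype.piFinset (fun _ : Fin k => G),
          eval (Sum.elim x y) (U β * (Vp h * Δ g))
        = (∏ j, lagval K ((β j : F)) (x j)) * (if g = h then 1 else 0) := by
    intro β h g x
    rw [Finset.sum_congr rfl fun y _ => hevalZ β h g x y]
    rw [← Finset.mul_sum]
    congr 1
    calc ∑ y ∈ Fintype.piFinset (fun _ : Fin k => G),
          (∏ j, lagval W ((h j : F)) (y j)) * (∏ j, lagval G ((g j : F)) (y j))
        = ∑ y ∈ Fintype.piFinset (fun _ : Fin k => G),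
            ∏ j, (lagval W ((h j : F)) (y j) * lagval G ((g j : F)) (y j)) := by
          exact Finset.sum_congr rfl fun y _ => (Finset.prod_mul_distrib).symm
      _ = ∏ j, ∑ c ∈ G, (lagval W ((h j : F)) c * lagval G ((g j : F)) c) :=
          (Finset.prod_univ_sum (fun _ : Fin k => G)
            (fun j c => lagval W ((h j : F)) c * lagval G ((g j : F)) c)).symm
      _ = ∏ j, lagval W ((h j : F)) ((g j : F)) :=
          Finset.prod_congr rfl fun j _ => hGsum h g j
      _ = if g = h then 1 else 0 := hWdelta h g
  -- the matrices
  set P : Matrix (Fin ℓ × ι) (Kt × ι) F := Matrix.blockDiagonal (fun _ : ι => M.transpose) with hP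
  set R : Matrix (Fin ℓ × ι) {q // q ∈ S} F :=
    fun p q => D q.1 p.1 * ∏ j, lagval G ((p.2 j : F)) (q.1.2 j) with hR
  set Q : Matrix {q // q ∈ S} (Kt × ι) F :=
    fun q c => (∏ j, lagval K ((c.1 j : F)) (q.1.1 j)) *
      ∏ j, lagval W ((c.2 j : F)) (q.1.2 j) with hQ
  have hPRQ : P = R * Q := by
    ext ⟨i, g⟩ ⟨β, h⟩
    have hm := hmain (U β * (Vp h * Δ g)) (hdegX β h g) (hdegY β h g) i
    -- rewrite the LHS of hm
    have e1 : ∑ α ∈ Fintype.piFinset (fun _ : Fin m => L),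
        C α i * ∑ y ∈ Fintype.piFinset (fun _ : Fin k => G),
          eval (Sum.elim α y) (U β * (Vp h * Δ g))
        = (if g = h then 1 else 0) * M β i := by
      have step1 : ∀ α ∈ Fintype.piFinset (fun _ : Fin m => L),
          C α i * ∑ y ∈ Fintype.piFinset (fun _ : Fin k => G),
            eval (Sum.elim α y) (U β * (Vp h * Δ g))
          = ∑ β' ∈ Fintype.piFinset (fun _ : Fin m => K),
              (B β' α * C α i) *
                ((∏ j, lagval K ((β j : F)) (β' j)) * (if g = h then 1 else 0)) := by
        intro α hα
        rw [Finset.sum_congr rfl fun y _ =>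
          hB (U β * (Vp h * Δ g)) (hdegX β h g) (hdegY β h g) α hα y]
        rw [Finset.sum_comm, Finset.mul_sum]
        refine Finset.sum_congr rfl fun β' hβ' => ?_
        rw [← Finset.mul_sum, hSy β h g β']
        ring
      rw [Finset.sum_congr rfl step1, Finset.sum_comm]
      rw [Finset.sum_congr rfl (fun β' hβ' => by
        rw [← Finset.sum_mul, hUdelta β β' hβ'])]
      rw [Finset.sum_eq_single_of_mem (fun j => ((β j : F)))
        (Fintype.mem_piFinset.mpr fun j => (β j).2)
        (fun b _ hb => by rw [if_neg hb]; ring)]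
      rw [if_pos rfl, one_mul]
      exact mul_comm _ _
    -- rewrite the RHS of hm
    have e2 : ∑ q ∈ S, D q i * eval (Sum.elim q.1 q.2) (U β * (Vp h * Δ g))
        = (R * Q) (i, g) (β, h) := by
      rw [Matrix.mul_apply]
      rw [Finset.univ_eq_attach, ← Finset.sum_attach S
        (fun q => D q i * eval (Sum.elim q.1 q.2) (U β * (Vp h * Δ g)))]
      refine Finset.sum_congr rfl fun q _ => ?_
      rw [hevalZ β h g q.1.1 q.1.2]
      show D q.1 i * _ = ((D q.1 i * ∏ j, lagval G ((g j : F)) (q.1.2 j)) *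
        ((∏ j, lagval K ((β j : F)) (q.1.1 j)) * ∏ j, lagval W ((h j : F)) (q.1.2 j)))
      ring
    rw [e1, e2] at hm
    rw [← hm, hP, Matrix.blockDiagonal_apply]
    split <;> simp [Matrix.transpose_apply]
  have hrank : P.rank ≤ S.card := by
    rw [hPRQ]
    exact (Matrix.rank_mul_le_right R Q).trans
      ((Matrix.rank_le_card_height Q).trans_eq (Fintype.card_coe S))
  have hlow : Fintype.card ι * M.transpose.rank ≤ P.rank := card_mul_rank_le_rank_blockDiagonal M.transpose
  rw [Matrix.rank_transpose] at hlow
  have hcard : Fintype.card ι = t ^ k := by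
    show Fintype.card (Fin k → {x // x ∈ W}) = t ^ k
    rw [Fintype.card_fun, Fintype.card_coe, hWcard, Fintype.card_fin]
  rw [← hcard, mul_comm]
  exact hlow.trans hrank
end

section
/- Let F be a finite field, G ⊆ F, and d, d' ∈ ℕ with d' ≥ 2(|G| − 1). Suppose S ⊆ F^{m+k} and coefficients (c_α)_{α∈F^m}, (d_q)_{q∈S} satisfy: (i) for every polynomial Z in m+k variables with individual degree at most d in the first m variables and at most d' in the last k variables, ∑_{α∈F^m} c_α ∑_{y∈G^k} Z(α, y) = ∑_{q∈S} d_q Z(q); and (ii) there exists such a polynomial Z' with ∑_{α∈F^m} c_α ∑_{y∈G^k} Z'(α, y) ≠ 0. Then |S| ≥ |G|^k. -/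
open MvPolynomial Finset

section Aux

variable {F : Type*} [Field F]

private lemma mv_aeval_eq_eval {σ : Type*} (f : σ → F) (p : MvPolynomial σ F) :
    MvPolynomial.aeval f p = MvPolynomial.eval f p := by
  rw [← MvPolynomial.coe_aeval_eq_eval]
  rfl

private lemma degreeOf_eq_zero_of_notMem_vars {σ : Type*} [DecidableEq σ]
    {p : MvPolynomial σ F} {n : σ} (h : n ∉ p.vars) : p.degreeOf n = 0 :=
  Nat.le_zero.mp (degreeOf_le_iff.mpr fun m hm =>
    le_of_eq (mem_support_notMem_vars_zero hm h))

private lemma degreeOf_aeval_elim_le {m k : ℕ} (Z : MvPolynomial (Fin m ⊕ Fin k) F)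
    (y : Fin k → F) (i : Fin m) :
    degreeOf i
      (aeval (Sum.elim X (fun j => C (y j)) : (Fin m ⊕ Fin k) → MvPolynomial (Fin m) F) Z)
      ≤ degreeOf (Sum.inl i) Z := by
  classical
  rw [aeval_def, eval₂_eq]
  refine (degreeOf_sum_le _ _ _).trans (Finset.sup_le fun s hs => ?_)
  refine (degreeOf_mul_le _ _ _).trans ?_
  have h1 : degreeOf i ((algebraMap F (MvPolynomial (Fin m) F)) (coeff s Z)) = 0 := by
    rw [MvPolynomial.algebraMap_eq]; exact degreeOf_C _ _
  rw [h1, zero_add]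
  refine (degreeOf_prod_le _ _ _).trans ?_
  have h2 : ∀ v ∈ s.support,
      degreeOf i ((Sum.elim X (fun j => C (y j)) : (Fin m ⊕ Fin k) → MvPolynomial (Fin m) F) v
        ^ s v) ≤ if v = Sum.inl i then s v else 0 := by
    intro v _
    rcases v with i' | j
    · refine (degreeOf_pow_le _ _ _).trans ?_
      rw [Sum.elim_inl, degreeOf_X]
      by_cases hii : i = i'
      · subst hii; simp
      · rw [if_neg hii, Nat.mul_zero]
        exact Nat.zero_le _
    · refine (degreeOf_pow_le _ _ _).trans ?_
      simp
  refine (Finset.sum_le_sum h2).trans ?_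
  rw [Finset.sum_ite_eq' s.support (Sum.inl i) (fun v => s v)]
  split_ifs with h
  · exact monomial_le_degreeOf _ (by simpa using hs)
  · exact Nat.zero_le _

private lemma degreeOf_polyaeval_le {k : ℕ} (q : Polynomial F) (j j' : Fin k) :
    degreeOf j' (Polynomial.aeval (X j : MvPolynomial (Fin k) F) q)
      ≤ if j' = j then q.natDegree else 0 := by
  classical
  rw [Polynomial.aeval_def, Polynomial.eval₂_eq_sum, Polynomial.sum_def]
  refine (degreeOf_sum_le _ _ _).trans (Finset.sup_le fun e he => ?_)
  refine (degreeOf_mul_le _ _ _).trans ?_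
  have h1 : degreeOf j' ((algebraMap F (MvPolynomial (Fin k) F)) (q.coeff e)) = 0 := by
    rw [MvPolynomial.algebraMap_eq]; exact degreeOf_C _ _
  rw [h1, zero_add]
  refine (degreeOf_pow_le _ _ _).trans ?_
  rw [degreeOf_X]
  split_ifs with h
  · simpa using Polynomial.le_natDegree_of_mem_supp e he
  · simp

private lemma eval_polyaeval {k : ℕ} (y : Fin k → F) (q : Polynomial F) (j : Fin k) :
    MvPolynomial.eval y (Polynomial.aeval (X j : MvPolynomial (Fin k) F) q)
      = Polynomial.eval (y j) q := by
  have h := Polynomial.aeval_algHom_apply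
    (MvPolynomial.aeval y : MvPolynomial (Fin k) F →ₐ[F] F) (X j) q
  rw [MvPolynomial.aeval_X] at h
  rw [← mv_aeval_eq_eval, ← h, Polynomial.coe_aeval_eq_eval]

end Aux

/-- Special case of the algebraic query complexity lower bound: if some
nontrivial linear combination of the partial sums `∑_{y ∈ G^k} Z(α,y)`
is determined by the evaluations of `Z` on a set `S` of points, for all `Z`
of individual degree `≤ d` in the first `m` variables and `≤ d'` in the
last `k` variables with `d' ≥ 2(|G|-1)`, then `|S| ≥ |G|^k`. -/
theorem algebraic_query_complexity_sum_special_case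
    {F : Type*} [Field F] [Fintype F]
    (G : Finset F) (m k d d' : ℕ) (hd' : 2 * (G.card - 1) ≤ d')
    (S : Finset ((Fin m → F) × (Fin k → F)))
    (c : (Fin m → F) → F) (dcoef : ((Fin m → F) × (Fin k → F)) → F)
    (hmain : ∀ Z : MvPolynomial (Fin m ⊕ Fin k) F,
        (∀ i, Z.degreeOf (Sum.inl i) ≤ d) → (∀ j, Z.degreeOf (Sum.inr j) ≤ d') →
        ∑ α : Fin m → F,
          c α * ∑ y ∈ Fintype.piFinset (fun _ : Fin k => G),
            MvPolynomial.eval (Sum.elim α y) Z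
        = ∑ q ∈ S, dcoef q * MvPolynomial.eval (Sum.elim q.1 q.2) Z)
    (hnontriv : ∃ Z' : MvPolynomial (Fin m ⊕ Fin k) F,
        (∀ i, Z'.degreeOf (Sum.inl i) ≤ d) ∧ (∀ j, Z'.degreeOf (Sum.inr j) ≤ d') ∧
        ∑ α : Fin m → F,
          c α * ∑ y ∈ Fintype.piFinset (fun _ : Fin k => G),
            MvPolynomial.eval (Sum.elim α y) Z' ≠ 0) :
    G.card ^ k ≤ S.card := by
  classical
  obtain ⟨Z', hZd, hZd', hA⟩ := hnontriv
  set GY : Finset (Fin k → F) := Fintype.piFinset (fun _ : Fin k => G) with hGY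
  -- find y* with ∑_α c α * Z'(α, y*) ≠ 0
  have hswap : ∑ y ∈ GY, ∑ α : Fin m → F, c α * MvPolynomial.eval (Sum.elim α y) Z' ≠ 0 := by
    rw [Finset.sum_comm]
    simpa [Finset.mul_sum] using hA
  obtain ⟨ystar, hystar, hB⟩ := Finset.exists_ne_zero_of_sum_ne_zero hswap
  -- Lagrange delta polynomials
  set δ : (Fin k → F) → MvPolynomial (Fin k) F :=
    fun y₀ => ∏ j : Fin k, Polynomial.aeval (X j) (Lagrange.basis G id (y₀ j)) with hδ
  have hmemG : ∀ {y₀ : Fin k → F}, y₀ ∈ GY → ∀ j, y₀ j ∈ G := by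
    intro y₀ hy₀ j
    exact Fintype.mem_piFinset.mp hy₀ j
  have hδdeg : ∀ {y₀ : Fin k → F}, y₀ ∈ GY → ∀ j, degreeOf j (δ y₀) ≤ G.card - 1 := by
    intro y₀ hy₀ j
    refine (degreeOf_prod_le _ _ _).trans ?_
    have h2 : ∀ j' ∈ (Finset.univ : Finset (Fin k)),
        degreeOf j (Polynomial.aeval (X j' : MvPolynomial (Fin k) F)
          (Lagrange.basis G id (y₀ j'))) ≤ if j = j' then G.card - 1 else 0 := by
      intro j' _
      refine (degreeOf_polyaeval_le _ _ _).trans ?_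
      split_ifs with h
      · rw [Lagrange.natDegree_basis (Set.injOn_id _) (hmemG hy₀ j')]
      · exact le_rfl
    refine (Finset.sum_le_sum h2).trans ?_
    simp
  have hδeval : ∀ {y₀ : Fin k → F}, y₀ ∈ GY → ∀ {y : Fin k → F}, y ∈ GY →
      MvPolynomial.eval y (δ y₀) = if y = y₀ then 1 else 0 := by
    intro y₀ hy₀ y hy
    have hprod : MvPolynomial.eval y (δ y₀)
        = ∏ j : Fin k, Polynomial.eval (y j) (Lagrange.basis G id (y₀ j)) := by
      simp only [hδ]
      rw [map_prod (MvPolynomial.eval y)]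
      exact Finset.prod_congr rfl fun j _ => eval_polyaeval y _ j
    rw [hprod]
    by_cases h : y = y₀
    · subst h
      rw [if_pos rfl]
      refine Finset.prod_eq_one fun j _ => ?_
      exact Lagrange.eval_basis_self (Set.injOn_id _) (hmemG hy₀ j)
    · rw [if_neg h]
      obtain ⟨j, hj⟩ : ∃ j, y j ≠ y₀ j := by
        by_contra hc
        push_neg at hc
        exact h (funext hc)
      refine Finset.prod_eq_zero (Finset.mem_univ j) ?_
      exact Lagrange.eval_basis_of_ne (v := id) (s := G) (i := y₀ j) (j := y j)
        (fun hh => hj hh.symm) (hmemG hy j)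
  -- key vanishing lemma
  have hvanish : ∀ p : MvPolynomial (Fin k) F,
      (∀ j, degreeOf j p ≤ G.card - 1) →
      (∀ q ∈ S, MvPolynomial.eval q.2 p = 0) →
      ∀ y₀ ∈ GY, MvPolynomial.eval y₀ p = 0 := by
    intro p hpdeg hpS y₀ hy₀
    by_contra hne
    set Q : MvPolynomial (Fin m) F :=
      aeval (Sum.elim X (fun j => C (ystar j))) Z' with hQ
    set Z : MvPolynomial (Fin m ⊕ Fin k) F :=
      rename Sum.inl Q * rename Sum.inr (δ y₀ * p) with hZ
    have hevalQ : ∀ α : Fin m → F,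
        MvPolynomial.eval α Q = MvPolynomial.eval (Sum.elim α ystar) Z' := by
      intro α
      rw [hQ, ← mv_aeval_eq_eval, comp_aeval_apply, ← mv_aeval_eq_eval]
      have hfun : (fun v => (aeval α : MvPolynomial (Fin m) F →ₐ[F] F)
          ((Sum.elim X fun j => C (ystar j)) v)) = Sum.elim α ystar := by
        funext v; rcases v with i | j <;> simp
      rw [hfun]
    have hevalZ : ∀ (α : Fin m → F) (y : Fin k → F),
        MvPolynomial.eval (Sum.elim α y) Z
          = MvPolynomial.eval (Sum.elim α ystar) Z'
            * (MvPolynomial.eval y (δ y₀) * MvPolynomial.eval y p) := by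
      intro α y
      rw [hZ, map_mul, eval_rename, eval_rename, Sum.elim_comp_inl, Sum.elim_comp_inr,
        hevalQ, map_mul]
    have hinl_zero : ∀ (i : Fin m) (r : MvPolynomial (Fin k) F),
        degreeOf (Sum.inl i) (rename Sum.inr r : MvPolynomial (Fin m ⊕ Fin k) F) = 0 := by
      intro i r
      refine degreeOf_eq_zero_of_notMem_vars fun hv => ?_
      have := vars_rename Sum.inr r hv
      simp only [Finset.mem_image] at this
      obtain ⟨j, _, hj⟩ := this
      exact Sum.inr_ne_inl hj
    have hinr_zero : ∀ (j : Fin k) (r : MvPolynomial (Fin m) F),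
        degreeOf (Sum.inr j) (rename Sum.inl r : MvPolynomial (Fin m ⊕ Fin k) F) = 0 := by
      intro j r
      refine degreeOf_eq_zero_of_notMem_vars fun hv => ?_
      have := vars_rename Sum.inl r hv
      simp only [Finset.mem_image] at this
      obtain ⟨i, _, hi⟩ := this
      exact Sum.inl_ne_inr hi
    have hdeg1 : ∀ i, degreeOf (Sum.inl i) Z ≤ d := by
      intro i
      rw [hZ]
      refine (degreeOf_mul_le _ _ _).trans ?_
      rw [hinl_zero i, add_zero,
        degreeOf_rename_of_injective Sum.inl_injective]
      exact (degreeOf_aeval_elim_le Z' ystar i).trans (hZd i)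
    have hdeg2 : ∀ j, degreeOf (Sum.inr j) Z ≤ d' := by
      intro j
      rw [hZ]
      refine (degreeOf_mul_le _ _ _).trans ?_
      rw [hinr_zero j, zero_add,
        degreeOf_rename_of_injective Sum.inr_injective]
      refine le_trans ((degreeOf_mul_le _ _ _).trans ?_) hd'
      rw [two_mul]
      exact Nat.add_le_add (hδdeg hy₀ j) (hpdeg j)
    have h := hmain Z hdeg1 hdeg2
    -- compute LHS
    have hLHS : ∑ α : Fin m → F,
        c α * ∑ y ∈ GY, MvPolynomial.eval (Sum.elim α y) Z
        = (∑ α : Fin m → F, c α * MvPolynomial.eval (Sum.elim α ystar) Z')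
            * MvPolynomial.eval y₀ p := by
      rw [Finset.sum_mul]
      refine Finset.sum_congr rfl fun α _ => ?_
      have : ∑ y ∈ GY, MvPolynomial.eval (Sum.elim α y) Z
          = MvPolynomial.eval (Sum.elim α ystar) Z' * MvPolynomial.eval y₀ p := by
        have h2 : ∑ y ∈ GY, MvPolynomial.eval (Sum.elim α y) Z
            = ∑ y ∈ GY, MvPolynomial.eval (Sum.elim α ystar) Z'
                * ((if y = y₀ then (1:F) else 0) * MvPolynomial.eval y p) := by
          refine Finset.sum_congr rfl fun y hy => ?_
          rw [hevalZ, hδeval hy₀ hy]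
        rw [h2, ← Finset.mul_sum]
        congr 1
        rw [Finset.sum_congr rfl (fun y _ => by rw [ite_mul, one_mul, zero_mul]),
          Finset.sum_ite_eq' GY y₀ (fun y => MvPolynomial.eval y p), if_pos hy₀]
      rw [this, mul_assoc]
    -- compute RHS
    have hRHS : ∑ q ∈ S, dcoef q * MvPolynomial.eval (Sum.elim q.1 q.2) Z = 0 := by
      refine Finset.sum_eq_zero fun q hq => ?_
      rw [hevalZ, hpS q hq]
      ring
    rw [hLHS, hRHS] at h
    exact (mul_ne_zero hB hne) h
  -- counting via injectivity of evaluation on S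
  set P : (GY → F) → MvPolynomial (Fin k) F :=
    fun v => ∑ y₀ ∈ GY.attach, C (v y₀) * δ y₀.val with hP
  have hPdeg : ∀ v j, degreeOf j (P v) ≤ G.card - 1 := by
    intro v j
    refine (degreeOf_sum_le _ _ _).trans (Finset.sup_le fun y₀ _ => ?_)
    refine (degreeOf_mul_le _ _ _).trans ?_
    rw [degreeOf_C, zero_add]
    exact hδdeg y₀.prop j
  have hPeval : ∀ (v : GY → F) (y₀ : GY), MvPolynomial.eval y₀.val (P v) = v y₀ := by
    intro v y₀
    rw [hP]
    rw [map_sum]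
    have h2 : ∀ y' ∈ GY.attach,
        MvPolynomial.eval y₀.val (C (v y') * δ y'.val)
          = if y' = y₀ then v y' else 0 := by
      intro y' _
      rw [map_mul, eval_C, hδeval y'.prop y₀.prop]
      by_cases h : y₀.val = y'.val
      · rw [if_pos h, if_pos (Subtype.ext h.symm), mul_one]
      · rw [if_neg h, if_neg (fun hh => h (congrArg Subtype.val hh.symm)), mul_zero]
    rw [Finset.sum_congr rfl h2, Finset.sum_ite_eq' GY.attach y₀ (fun y' => v y'),
      if_pos (Finset.mem_attach _ _)]
  set Λ : (GY → F) → (S → F) := fun v q => MvPolynomial.eval q.val.2 (P v) with hΛ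
  have hinj : Function.Injective Λ := by
    intro v₁ v₂ hEq
    funext y₀
    set w : GY → F := fun y => v₁ y - v₂ y with hw
    have hPw : P w = P v₁ - P v₂ := by
      rw [hP]
      simp only [hw, map_sub, sub_mul]
      rw [Finset.sum_sub_distrib]
    have hPwS : ∀ q ∈ S, MvPolynomial.eval q.2 (P w) = 0 := by
      intro q hq
      rw [hPw, map_sub]
      have := congrFun hEq ⟨q, hq⟩
      rw [hΛ] at this
      simpa [sub_eq_zero] using this
    have := hvanish (P w) (hPdeg w) hPwS y₀.val y₀.prop
    rw [hPeval w y₀, hw] at this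
    exact sub_eq_zero.mp this
  have hcard := Fintype.card_le_of_injective Λ hinj
  rw [Fintype.card_fun, Fintype.card_fun, Fintype.card_coe, Fintype.card_coe] at hcard
  have hGYcard : GY.card = G.card ^ k := by
    rw [hGY, Fintype.card_piFinset]
    simp
  rw [hGYcard] at hcard
  exact (Nat.pow_le_pow_iff_right Fintype.one_lt_card).mp hcard
end

section
/- Let F be a finite field, G ⊆ F, and d, d' ∈ ℕ with d' ≥ 2(|G| − 1). Let Q ⊆ F^{m+k} with |Q| < |G|^k, and let Z be uniformly random among polynomials in m+k variables over F with individual degree at most d in the first m variables and at most d' in the remaining k variables. Then the random families (∑_{y∈G^k} Z(α, y))_{α∈F^m} and (Z(q))_{q∈Q} are statistically independent. -/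
/-! Pick `P(Y)` of individual degree `≤ 2(|G| - 1)` that vanishes at the `Y`-coordinates of all
query points and sums to `1` over `G^k`. Such a `P` exists because `|Q| < |G|^k`: some nonzero
combination `N` of the polynomials `gridDelta G c` (each vanishing on `G^k` except at `c`)
vanishes on `Q`, and `P` is `N · gridDelta G c` for a grid point `c` with `N(c) ≠ 0`, rescaled.

Then `π Z = R_Z(X) · P(Y)`, where `R_Z(X) = ∑_{y ∈ G^k} Z(X, y)`, is a linear projection of the
space of admissible commitments that keeps `R_Z` and vanishes on `Q`. The involution
`(Z, W) ↦ (W + π (Z - W), Z - π (Z - W))` matches the pairs `(Z, W)` where `Z` has the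
prescribed partial sums and values on `Q` with the pairs where the first component has the
prescribed partial sums and the second the prescribed values on `Q`. -/

open MvPolynomial Finset

theorem natCard_fiber_inter_mul_natCard_eq {M A B : Type*} [AddCommGroup M] [AddCommGroup A]
    [AddCommGroup B] (V : AddSubgroup M) (ρ : M →+ A) (ε : M →+ B) (π : M →+ M)
    (hπV : ∀ v ∈ V, π v ∈ V) (hππ : ∀ v, π (π v) = π v) (hρπ : ∀ v, ρ (π v) = ρ v)
    (hεπ : ∀ v, ε (π v) = 0) (a : A) (b : B) :
    Nat.card {v // v ∈ V ∧ ρ v = a ∧ ε v = b} * Nat.card {v // v ∈ V} =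
      Nat.card {v // v ∈ V ∧ ρ v = a} * Nat.card {v // v ∈ V ∧ ε v = b} := by
  let Φ : M × M → M × M := fun p => (p.2 + π (p.1 - p.2), p.1 - π (p.1 - p.2))
  have hΦ : Function.Involutive Φ := by
    rintro ⟨v, w⟩
    simp only [Φ, Prod.mk.injEq, map_sub, map_add, hππ]
    constructor <;> abel
  have hΦV : ∀ p : M × M, p.1 ∈ V → p.2 ∈ V → (Φ p).1 ∈ V ∧ (Φ p).2 ∈ V := fun p hv hw =>
    ⟨add_mem hw (hπV _ (sub_mem hv hw)), sub_mem hv (hπV _ (sub_mem hv hw))⟩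
  have hρΦ (p : M × M) : ρ (Φ p).1 = ρ p.1 := by simp [Φ, hρπ]
  have hεΦ (p : M × M) : ε (Φ p).1 = ε p.2 ∧ ε (Φ p).2 = ε p.1 := by simp [Φ, hεπ]
  rw [← Nat.card_prod, ← Nat.card_prod]
  refine Nat.card_congr <| Equiv.subtypeProdEquivProd.symm.trans <|
    (Equiv.subtypeEquiv (hΦ.toPerm Φ) fun p => ?_).trans Equiv.subtypeProdEquivProd
  constructor
  · rintro ⟨⟨hv, hρ, hε⟩, hw⟩
    exact ⟨⟨(hΦV p hv hw).1, (hρΦ p).trans hρ⟩, (hΦV p hv hw).2, (hεΦ p).2.trans hε⟩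
  · rintro ⟨⟨hv, hρ⟩, hw, hε⟩
    rw [← hΦ p]
    exact ⟨⟨(hΦV _ hv hw).1, (hρΦ _).trans hρ, (hεΦ _).1.trans hε⟩, (hΦV _ hv hw).2⟩

namespace MvPolynomial

section Degrees

variable {R σ τ : Type*} [CommRing R]

theorem degreeOf_rename_eq_zero_of_notMem_range {f : σ → τ} (p : MvPolynomial σ R) {t : τ}
    (ht : t ∉ Set.range f) : degreeOf t (rename f p) = 0 := by
  by_contra h
  obtain ⟨s, -, rfl⟩ := mem_vars_rename f p (mem_vars_iff_degreeOf_ne_zero.mpr h)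
  exact ht ⟨s, rfl⟩

theorem eval_aeval_sumElim_X_C (y : τ → R) (α : σ → R) (p : MvPolynomial (σ ⊕ τ) R) :
    eval α (aeval (Sum.elim X (C ∘ y)) p) = eval (Sum.elim α y) p := by
  simpa [coe_aeval_eq_eval] using (aeval_sumElim p y α (S := R) (T := R)).symm

theorem aeval_sumElim_X_C_rename_mul_rename (y : τ → R) (r : MvPolynomial σ R)
    (q : MvPolynomial τ R) :
    aeval (Sum.elim X (C ∘ y)) (rename Sum.inl r * rename Sum.inr q) = r * C (eval y q) := by
  rw [map_mul, aeval_rename, aeval_rename, Sum.elim_comp_inl, Sum.elim_comp_inr,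
    aeval_X_left_apply]
  congr 1
  induction q using MvPolynomial.induction_on <;> simp_all

theorem degreeOf_aeval_sumElim_X_C_le [Nontrivial R] (y : τ → R) (p : MvPolynomial (σ ⊕ τ) R)
    (i : σ) : degreeOf i (aeval (Sum.elim X (C ∘ y)) p) ≤ degreeOf (Sum.inl i) p := by
  classical
  rw [aeval_def, eval₂_eq]
  refine (degreeOf_sum_le _ _ _).trans (Finset.sup_le fun u hu => ?_)
  have hfactor (s : σ ⊕ τ) :
      degreeOf i (Sum.elim X (C ∘ y) s ^ u s) ≤ if s = Sum.inl i then u s else 0 := by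
    refine (degreeOf_pow_le _ _ _).trans ?_
    rcases s with i' | j
    · obtain rfl | h := eq_or_ne i' i
      · simp
      · simp [degreeOf_X, h, h.symm]
    · simp [degreeOf_C]
  calc degreeOf i (algebraMap R _ (coeff u p) * ∏ s ∈ u.support, Sum.elim X (C ∘ y) s ^ u s)
      ≤ ∑ s ∈ u.support, if s = Sum.inl i then u s else 0 := by
        refine (degreeOf_mul_le _ _ _).trans ?_
        rw [algebraMap_eq, degreeOf_C, zero_add]
        exact (degreeOf_prod_le _ _ _).trans (Finset.sum_le_sum fun s _ => hfactor s)
    _ ≤ u (Sum.inl i) := by rw [Finset.sum_ite_eq']; split_ifs <;> simp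
    _ ≤ degreeOf (Sum.inl i) p := monomial_le_degreeOf _ hu

noncomputable def restrictDegreeOf (n : σ → ℕ) : Submodule R (MvPolynomial σ R) :=
  restrictSupport R {u | ∀ i, u i ≤ n i}

theorem mem_restrictDegreeOf {n : σ → ℕ} {p : MvPolynomial σ R} :
    p ∈ restrictDegreeOf n ↔ ∀ i, degreeOf i p ≤ n i := by
  simp only [restrictDegreeOf, mem_restrictSupport_iff, Set.subset_def, Finset.mem_coe,
    Set.mem_ofPred_eq, degreeOf_le_iff]
  exact ⟨fun h i u hu => h u hu i, fun h u hu i => h i u hu⟩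

end Degrees

section GridDelta

variable {R ι : Type*} [CommRing R] [DecidableEq R] [Fintype ι]

noncomputable def gridDelta (G : Finset R) (c : ι → R) : MvPolynomial ι R :=
  ∏ i, ∏ g ∈ G.erase (c i), (X i - C g)

theorem eval_gridDelta_of_ne {G : Finset R} {c y : ι → R} (hy : ∀ i, y i ∈ G) (hyc : y ≠ c) :
    eval y (gridDelta G c) = 0 := by
  obtain ⟨i, hi⟩ := Function.ne_iff.mp hyc
  simp only [gridDelta, map_prod, map_sub, eval_X, eval_C]
  exact prod_eq_zero (mem_univ i) (prod_eq_zero (mem_erase.mpr ⟨hi, hy i⟩) (sub_self _))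

theorem eval_gridDelta_self_ne_zero [IsDomain R] (G : Finset R) (c : ι → R) :
    eval c (gridDelta G c) ≠ 0 := by
  simp only [gridDelta, map_prod, map_sub, eval_X, eval_C, prod_ne_zero_iff]
  exact fun i _ g hg => sub_ne_zero.mpr (ne_of_mem_erase hg).symm

theorem degreeOf_gridDelta_le [Nontrivial R] {G : Finset R} {c : ι → R} (hc : ∀ i, c i ∈ G)
    (j : ι) :
    degreeOf j (gridDelta G c) ≤ #G - 1 := by
  classical
  have hfactor (i : ι) (g : R) :
      degreeOf j (X i - C g : MvPolynomial ι R) ≤ if j = i then 1 else 0 :=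
    (degreeOf_sub_le _ _ _).trans (by simp [degreeOf_X, degreeOf_C])
  calc degreeOf j (gridDelta G c)
      ≤ ∑ i, ∑ _g ∈ G.erase (c i), if j = i then 1 else 0 :=
        (degreeOf_prod_le _ _ _).trans <| sum_le_sum fun i _ =>
          (degreeOf_prod_le _ _ _).trans <| sum_le_sum fun g _ => hfactor i g
    _ = #G - 1 := by simp [card_erase_of_mem (hc j)]

end GridDelta

section HidingPolynomial

variable {F ι : Type*} [Field F] [Fintype ι] [DecidableEq ι]

theorem exists_degreeOf_le_eval_eq_zero_and_ne_zero_on_grid (G : Finset F)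
    (Q : Finset (ι → F)) (hQ : #Q < #G ^ Fintype.card ι) :
    ∃ N : MvPolynomial ι F, (∀ j, degreeOf j N ≤ #G - 1) ∧ (∀ q ∈ Q, eval q N = 0) ∧
      ∃ c ∈ Fintype.piFinset fun _ => G, eval c N ≠ 0 := by
  classical
  set grid := Fintype.piFinset fun _ : ι => G
  let δ : grid → MvPolynomial ι F := fun c => gridDelta G c
  have hgrid (c : grid) (i : ι) : (c : ι → F) i ∈ G := Fintype.mem_piFinset.mp c.2 i
  let L : (grid → F) →ₗ[F] Q → F :=
    (LinearMap.pi fun q : Q => (aeval (q : ι → F)).toLinearMap) ∘ₗ Fintype.linearCombination F δ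
  obtain ⟨φ, hφ, hφ0⟩ := Submodule.exists_mem_ne_zero_of_ne_bot <|
    L.ker_ne_bot_of_finrank_lt (by simpa [grid, Fintype.card_piFinset] using hQ)
  obtain ⟨c, hc⟩ : ∃ c, φ c ≠ 0 := Function.ne_iff.mp hφ0
  refine ⟨Fintype.linearCombination F δ φ, fun j => ?_, fun q hq => ?_, c, c.2, ?_⟩
  · rw [Fintype.linearCombination_apply]
    refine (degreeOf_sum_le _ _ _).trans (Finset.sup_le fun c _ => ?_)
    rw [smul_eq_C_mul]
    exact (degreeOf_C_mul_le _ _ _).trans (degreeOf_gridDelta_le (hgrid c) j)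
  · simpa [L] using congrFun (LinearMap.mem_ker.mp hφ) ⟨q, hq⟩
  · rw [Fintype.linearCombination_apply, map_sum, sum_eq_single c]
    · rw [smul_eq_C_mul, map_mul, eval_C]
      exact mul_ne_zero hc (eval_gridDelta_self_ne_zero G (c : ι → F))
    · intro c' _ hc'
      rw [smul_eq_C_mul, map_mul,
        eval_gridDelta_of_ne (hgrid c) (Subtype.coe_ne_coe.mpr hc'.symm), mul_zero]
    · simp

theorem exists_degreeOf_le_eval_eq_zero_sum_eq_one (G : Finset F)
    (Q : Finset (ι → F)) (hQ : #Q < #G ^ Fintype.card ι) :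
    ∃ P : MvPolynomial ι F, (∀ j, degreeOf j P ≤ 2 * (#G - 1)) ∧ (∀ q ∈ Q, eval q P = 0) ∧
      ∑ y ∈ Fintype.piFinset (fun _ => G), eval y P = 1 := by
  classical
  obtain ⟨N, hNdeg, hNQ, c, hc, hNc⟩ :=
    exists_degreeOf_le_eval_eq_zero_and_ne_zero_on_grid G Q hQ
  have hcG : ∀ i, c i ∈ G := Fintype.mem_piFinset.mp hc
  set D := N * gridDelta G c
  have hDc : eval c D ≠ 0 := by
    rw [map_mul]; exact mul_ne_zero hNc (eval_gridDelta_self_ne_zero G c)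
  refine ⟨C (eval c D)⁻¹ * D, fun j => ?_, fun q hq => by simp [D, hNQ q hq], ?_⟩
  · calc degreeOf j (C (eval c D)⁻¹ * D) ≤ degreeOf j N + degreeOf j (gridDelta G c) :=
          (degreeOf_C_mul_le _ _ _).trans (degreeOf_mul_le _ _ _)
      _ ≤ 2 * (#G - 1) := by linarith [hNdeg j, degreeOf_gridDelta_le hcG j]
  · rw [sum_eq_single c (fun y hy hyc => ?_) (fun h => absurd hc h)]
    · rw [map_mul, eval_C, inv_mul_cancel₀ hDc]
    · simp only [D, map_mul, eval_gridDelta_of_ne (Fintype.mem_piFinset.mp hy) hyc, mul_zero]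

end HidingPolynomial

section GridSum

variable {R σ τ : Type*} [CommRing R] [Fintype τ] [DecidableEq τ]

noncomputable def gridSum (G : Finset R) : MvPolynomial (σ ⊕ τ) R →ₗ[R] MvPolynomial σ R :=
  ∑ y ∈ Fintype.piFinset fun _ : τ => G, (aeval (Sum.elim X (C ∘ y))).toLinearMap

theorem eval_gridSum (G : Finset R) (α : σ → R) (p : MvPolynomial (σ ⊕ τ) R) :
    eval α (gridSum G p) = ∑ y ∈ Fintype.piFinset fun _ : τ => G, eval (Sum.elim α y) p := by
  simp only [gridSum, LinearMap.sum_apply, map_sum,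
    AlgHom.toLinearMap_apply, eval_aeval_sumElim_X_C]

theorem degreeOf_gridSum_le [Nontrivial R] (G : Finset R) (p : MvPolynomial (σ ⊕ τ) R) (i : σ) :
    degreeOf i (gridSum G p) ≤ degreeOf (Sum.inl i) p := by
  simp only [gridSum, LinearMap.sum_apply, AlgHom.toLinearMap_apply]
  exact (degreeOf_sum_le _ _ _).trans
    (Finset.sup_le fun y _ => degreeOf_aeval_sumElim_X_C_le y p i)

theorem gridSum_rename_mul_rename (G : Finset R) (r : MvPolynomial σ R) (q : MvPolynomial τ R) :
    gridSum G (rename Sum.inl r * rename Sum.inr q) =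
      r * C (∑ y ∈ Fintype.piFinset fun _ : τ => G, eval y q) := by
  simp only [gridSum, LinearMap.sum_apply, AlgHom.toLinearMap_apply,
    aeval_sumElim_X_C_rename_mul_rename, map_sum, mul_sum]

noncomputable def gridSumLift (G : Finset R) (P : MvPolynomial τ R) :
    MvPolynomial (σ ⊕ τ) R →ₗ[R] MvPolynomial (σ ⊕ τ) R :=
  LinearMap.mulRight R (rename Sum.inr P) ∘ₗ (rename Sum.inl).toLinearMap ∘ₗ gridSum G

theorem gridSumLift_apply (G : Finset R) (P : MvPolynomial τ R) (p : MvPolynomial (σ ⊕ τ) R) :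
    gridSumLift G P p = rename Sum.inl (gridSum G p) * rename Sum.inr P := rfl

theorem eval_sumElim_gridSumLift (G : Finset R) (P : MvPolynomial τ R) (α : σ → R) (y : τ → R)
    (p : MvPolynomial (σ ⊕ τ) R) :
    eval (Sum.elim α y) (gridSumLift G P p) = eval α (gridSum G p) * eval y P := by
  rw [gridSumLift_apply, map_mul, eval_rename, eval_rename, Sum.elim_comp_inl, Sum.elim_comp_inr]

variable {G : Finset R} {P : MvPolynomial τ R}

theorem gridSum_gridSumLift (hP : ∑ y ∈ Fintype.piFinset fun _ : τ => G, eval y P = 1)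
    (p : MvPolynomial (σ ⊕ τ) R) : gridSum G (gridSumLift G P p) = gridSum G p := by
  rw [gridSumLift_apply, gridSum_rename_mul_rename, hP, C_1, mul_one]

theorem gridSumLift_idem (hP : ∑ y ∈ Fintype.piFinset fun _ : τ => G, eval y P = 1)
    (p : MvPolynomial (σ ⊕ τ) R) : gridSumLift G P (gridSumLift G P p) = gridSumLift G P p := by
  rw [gridSumLift_apply, gridSum_gridSumLift hP, gridSumLift_apply]

theorem degreeOf_inl_gridSumLift_le [Nontrivial R] (p : MvPolynomial (σ ⊕ τ) R) (i : σ) :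
    degreeOf (Sum.inl i) (gridSumLift G P p) ≤ degreeOf (Sum.inl i) p := by
  rw [gridSumLift_apply]
  refine (degreeOf_mul_le _ _ _).trans ?_
  rw [degreeOf_rename_of_injective Sum.inl_injective,
    degreeOf_rename_eq_zero_of_notMem_range _ (by simp), add_zero]
  exact degreeOf_gridSum_le G p i

theorem degreeOf_inr_gridSumLift_le (p : MvPolynomial (σ ⊕ τ) R) (j : τ) :
    degreeOf (Sum.inr j) (gridSumLift G P p) ≤ degreeOf j P := by
  rw [gridSumLift_apply]
  refine (degreeOf_mul_le _ _ _).trans ?_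
  rw [degreeOf_rename_of_injective Sum.inr_injective,
    degreeOf_rename_eq_zero_of_notMem_range _ (by simp), zero_add]

end GridSum

end MvPolynomial

theorem random_commitment_partial_sums_independent_general
    {F : Type*} [Field F]
    (G : Finset F) (m k d d' : ℕ) (hd' : 2 * (G.card - 1) ≤ d')
    (Q : Finset ((Fin m → F) × (Fin k → F))) (hQ : Q.card < G.card ^ k) :
    ∀ (f : (Fin m → F) → F) (g : ((Fin m → F) × (Fin k → F)) → F),
      Nat.card {Z : MvPolynomial (Fin m ⊕ Fin k) F //
          ((∀ i, Z.degreeOf (Sum.inl i) ≤ d) ∧ (∀ j, Z.degreeOf (Sum.inr j) ≤ d')) ∧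
          (∀ α : Fin m → F,
            ∑ y ∈ Fintype.piFinset (fun _ : Fin k => G),
              MvPolynomial.eval (Sum.elim α y) Z = f α) ∧
          (∀ q ∈ Q, MvPolynomial.eval (Sum.elim q.1 q.2) Z = g q)}
        * Nat.card {Z : MvPolynomial (Fin m ⊕ Fin k) F //
            (∀ i, Z.degreeOf (Sum.inl i) ≤ d) ∧ (∀ j, Z.degreeOf (Sum.inr j) ≤ d')}
      = Nat.card {Z : MvPolynomial (Fin m ⊕ Fin k) F //
            ((∀ i, Z.degreeOf (Sum.inl i) ≤ d) ∧ (∀ j, Z.degreeOf (Sum.inr j) ≤ d')) ∧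
            (∀ α : Fin m → F,
              ∑ y ∈ Fintype.piFinset (fun _ : Fin k => G),
                MvPolynomial.eval (Sum.elim α y) Z = f α)}
        * Nat.card {Z : MvPolynomial (Fin m ⊕ Fin k) F //
            ((∀ i, Z.degreeOf (Sum.inl i) ≤ d) ∧ (∀ j, Z.degreeOf (Sum.inr j) ≤ d')) ∧
            (∀ q ∈ Q, MvPolynomial.eval (Sum.elim q.1 q.2) Z = g q)} := by
  classical
  intro f g
  obtain ⟨P, hPdeg, hPQ, hPsum⟩ := exists_degreeOf_le_eval_eq_zero_sum_eq_one G
    (Q.image Prod.snd) (by simpa using card_image_le.trans_lt hQ)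
  let V : AddSubgroup (MvPolynomial (Fin m ⊕ Fin k) F) :=
    (restrictDegreeOf (Sum.elim (fun _ => d) fun _ => d')).toAddSubgroup
  let ρ : MvPolynomial (Fin m ⊕ Fin k) F →+ (Fin m → F) → F :=
    AddMonoidHom.mk' (fun Z α => eval α (gridSum G Z)) fun _ _ => by ext; simp
  let ε : MvPolynomial (Fin m ⊕ Fin k) F →+ Q → F :=
    AddMonoidHom.mk' (fun Z q => eval (Sum.elim q.1.1 q.1.2) Z) fun _ _ => by ext; simp
  have key := natCard_fiber_inter_mul_natCard_eq V ρ ε (gridSumLift G P).toAddMonoidHom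
    (fun Z hZ => ?_) (gridSumLift_idem hPsum) (fun Z => ?_) (fun Z => ?_) f (fun q => g q)
  · simpa [V, ρ, ε, mem_restrictDegreeOf, funext_iff, eval_gridSum] using key
  · simp only [V, LinearMap.toAddMonoidHom_coe, Submodule.mem_toAddSubgroup,
      mem_restrictDegreeOf, Sum.forall, Sum.elim_inl, Sum.elim_inr] at hZ ⊢
    exact ⟨fun i => (degreeOf_inl_gridSumLift_le Z i).trans (hZ.1 i),
      fun j => (degreeOf_inr_gridSumLift_le Z j).trans ((hPdeg j).trans hd')⟩
  · ext α; simp [ρ, gridSum_gridSumLift hPsum]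
  · ext q; simp [ε, eval_sumElim_gridSumLift, hPQ _ (mem_image_of_mem _ q.2)]

/-- Average-case (hiding) form of the algebraic query complexity lower bound:
for `Z` uniformly random among polynomials of individual degree `≤ d` in the
first `m` variables and `≤ d'` in the last `k` variables (`d' ≥ 2(|G|-1)`),
and `|Q| < |G|^k`, the family of partial sums `(∑_{y ∈ G^k} Z(α,y))_{α ∈ F^m}`
is statistically independent of the evaluations `(Z(q))_{q ∈ Q}`. -/
theorem random_commitment_partial_sums_independent
    {F : Type*} [Field F] [Fintype F]
    (G : Finset F) (m k d d' : ℕ) (hd' : 2 * (G.card - 1) ≤ d')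
    (Q : Finset ((Fin m → F) × (Fin k → F))) (hQ : Q.card < G.card ^ k) :
    ∀ (f : (Fin m → F) → F) (g : ((Fin m → F) × (Fin k → F)) → F),
      Nat.card {Z : MvPolynomial (Fin m ⊕ Fin k) F //
          ((∀ i, Z.degreeOf (Sum.inl i) ≤ d) ∧ (∀ j, Z.degreeOf (Sum.inr j) ≤ d')) ∧
          (∀ α : Fin m → F,
            ∑ y ∈ Fintype.piFinset (fun _ : Fin k => G),
              MvPolynomial.eval (Sum.elim α y) Z = f α) ∧
          (∀ q ∈ Q, MvPolynomial.eval (Sum.elim q.1 q.2) Z = g q)}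
        * Nat.card {Z : MvPolynomial (Fin m ⊕ Fin k) F //
            (∀ i, Z.degreeOf (Sum.inl i) ≤ d) ∧ (∀ j, Z.degreeOf (Sum.inr j) ≤ d')}
      = Nat.card {Z : MvPolynomial (Fin m ⊕ Fin k) F //
            ((∀ i, Z.degreeOf (Sum.inl i) ≤ d) ∧ (∀ j, Z.degreeOf (Sum.inr j) ≤ d')) ∧
            (∀ α : Fin m → F,
              ∑ y ∈ Fintype.piFinset (fun _ : Fin k => G),
                MvPolynomial.eval (Sum.elim α y) Z = f α)}
        * Nat.card {Z : MvPolynomial (Fin m ⊕ Fin k) F //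
            ((∀ i, Z.degreeOf (Sum.inl i) ≤ d) ∧ (∀ j, Z.degreeOf (Sum.inr j) ≤ d')) ∧
            (∀ q ∈ Q, MvPolynomial.eval (Sum.elim q.1 q.2) Z = g q)} :=
  random_commitment_partial_sums_independent_general G m k d d' hd' Q hQ
end

section
/- Let F be a field, A : {0,1}^s → F a function, and : F^s → F any polynomial of individual degree at most d that agrees with A on {0,1}^s, where d ≥ 4. If α_1, α_2, α_3 ∈ (F \ {0,1})^s and Â is chosen uniformly at random among all individual-degree-d extensions of A, then whenever the points α_1, α_2, α_3 are distinct, the triple (Â(α_1), Â(α_2), Â(α_3)) is uniformly distributed over F^3. -/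
open MvPolynomial Finset

section Aux

variable {F : Type*} [Field F] {s : ℕ}

lemma degOf_lin (i j : Fin s) (c : F) :
    degreeOf i (X j - C c : MvPolynomial (Fin s) F) ≤ if i = j then 1 else 0 := by
  have : (X j - C c : MvPolynomial (Fin s) F) = X j + C (-c) := by rw [map_neg, sub_eq_add_neg]
  rw [this]
  refine (degreeOf_add_le _ _ _).trans ?_
  simp [degreeOf_X]

noncomputable def vanishPoly (F : Type*) [Field F] (s : ℕ) : MvPolynomial (Fin s) F :=
  ∏ i, (X i * (X i - C 1))

lemma degOf_vanish (k : Fin s) : degreeOf k (vanishPoly F s) ≤ 2 := by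
  refine (degreeOf_prod_le _ _ _).trans ?_
  have h : ∀ i : Fin s, degreeOf k (X i * (X i - C 1) : MvPolynomial (Fin s) F)
      ≤ if k = i then 2 else 0 := by
    intro i
    refine (degreeOf_mul_le _ _ _).trans ?_
    have h1 := degOf_lin (F := F) k i 1
    have h2 : degreeOf k (X i : MvPolynomial (Fin s) F) = if k = i then 1 else 0 :=
      degreeOf_X _ _
    by_cases hki : k = i <;> simp_all <;> omega
  refine (Finset.sum_le_sum (fun i _ => h i)).trans ?_
  simp [Finset.sum_ite_eq]

lemma eval_vanish (x : Fin s → F) :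
    eval x (vanishPoly F s) = ∏ i, x i * (x i - 1) := by
  simp [vanishPoly]

lemma eval_vanish_bool (hs : 0 < s) (b : Fin s → Bool) :
    eval (fun i => if b i then (1:F) else 0) (vanishPoly F s) = 0 := by
  rw [eval_vanish]
  refine Finset.prod_eq_zero (Finset.mem_univ (⟨0, hs⟩ : Fin s)) ?_
  by_cases h : b ⟨0, hs⟩ <;> simp [h]

lemma eval_vanish_ne (x : Fin s → F) (hx : ∀ i, x i ≠ 0 ∧ x i ≠ 1) :
    eval x (vanishPoly F s) ≠ 0 := by
  rw [eval_vanish]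
  exact Finset.prod_ne_zero_iff.mpr fun i _ =>
    mul_ne_zero (hx i).1 (sub_ne_zero.mpr (hx i).2)

lemma exists_bump {d : ℕ} (hs : 0 < s) (hd : 4 ≤ d) (β γ δ : Fin s → F)
    (hβ : ∀ i, β i ≠ 0 ∧ β i ≠ 1) (hγ : β ≠ γ) (hδ : β ≠ δ) :
    ∃ Q : MvPolynomial (Fin s) F, (∀ k, Q.degreeOf k ≤ d) ∧
      (∀ b : Fin s → Bool, eval (fun i => if b i then (1:F) else 0) Q = 0) ∧
      eval β Q = 1 ∧ eval γ Q = 0 ∧ eval δ Q = 0 := by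
  obtain ⟨i₁, hi₁⟩ := Function.ne_iff.mp hγ
  obtain ⟨i₂, hi₂⟩ := Function.ne_iff.mp hδ
  set Q' : MvPolynomial (Fin s) F :=
    vanishPoly F s * (X i₁ - C (γ i₁)) * (X i₂ - C (δ i₂)) with hQ'
  have hevQ' : ∀ x : Fin s → F,
      eval x Q' = eval x (vanishPoly F s) * (x i₁ - γ i₁) * (x i₂ - δ i₂) := by
    intro x; simp [hQ']
  have hc : eval β Q' ≠ 0 := by
    rw [hevQ']
    exact mul_ne_zero (mul_ne_zero (eval_vanish_ne β hβ) (sub_ne_zero.mpr hi₁))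
      (sub_ne_zero.mpr hi₂)
  refine ⟨C (eval β Q')⁻¹ * Q', ?_, ?_, ?_, ?_, ?_⟩
  · intro k
    refine (degreeOf_mul_le _ _ _).trans ?_
    simp only [degreeOf_C, zero_add]
    refine le_trans ?_ hd
    rw [hQ']
    have ha : degreeOf k (X i₁ - C (γ i₁)) ≤ 1 :=
      (degOf_lin k i₁ (γ i₁)).trans (by split <;> omega)
    have hb : degreeOf k (X i₂ - C (δ i₂)) ≤ 1 :=
      (degOf_lin k i₂ (δ i₂)).trans (by split <;> omega)
    have h1 := degreeOf_mul_le k (vanishPoly F s) (X i₁ - C (γ i₁))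
    have h2 := degreeOf_mul_le k (vanishPoly F s * (X i₁ - C (γ i₁))) (X i₂ - C (δ i₂))
    have hv := degOf_vanish (F := F) k
    omega
  · intro b
    simp [hevQ' , eval_vanish_bool hs b]
  · simp only [map_mul, eval_C, hevQ']
    rw [← hevQ']
    exact inv_mul_cancel₀ hc
  · simp [hevQ']
  · simp [hevQ']

end Aux

/-- Hiding property of the randomized low-degree extension: for `d ≥ 4`, if
`Â` is chosen uniformly among all polynomials of individual degree at most `d`
agreeing with `A` on `{0,1}^s`, then for any three distinct evaluation points
whose coordinates all avoid `{0,1}`, the triple of evaluations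
`(Â(α₁), Â(α₂), Â(α₃))` is uniformly distributed over `F³`. -/
theorem randomized_extension_three_evals_uniform
    {F : Type*} [Field F] [Fintype F] (s d : ℕ) (hs : 0 < s) (hd : 4 ≤ d)
    (A : (Fin s → Bool) → F)
    (α₁ α₂ α₃ : Fin s → F)
    (h₁ : ∀ i, α₁ i ≠ 0 ∧ α₁ i ≠ 1)
    (h₂ : ∀ i, α₂ i ≠ 0 ∧ α₂ i ≠ 1)
    (h₃ : ∀ i, α₃ i ≠ 0 ∧ α₃ i ≠ 1)
    (hdist : α₁ ≠ α₂ ∧ α₁ ≠ α₃ ∧ α₂ ≠ α₃) :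
    ∀ w₁ w₂ w₃ : F,
      Nat.card {P : MvPolynomial (Fin s) F //
          ((∀ i, P.degreeOf i ≤ d) ∧
            (∀ b : Fin s → Bool,
              MvPolynomial.eval (fun i => if b i then (1 : F) else 0) P = A b)) ∧
          MvPolynomial.eval α₁ P = w₁ ∧ MvPolynomial.eval α₂ P = w₂ ∧
          MvPolynomial.eval α₃ P = w₃}
        * Fintype.card F ^ 3
      = Nat.card {P : MvPolynomial (Fin s) F //
          (∀ i, P.degreeOf i ≤ d) ∧
          (∀ b : Fin s → Bool,
            MvPolynomial.eval (fun i => if b i then (1 : F) else 0) P = A b)} := by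
  intro w₁ w₂ w₃
  obtain ⟨h12, h13, h23⟩ := hdist
  obtain ⟨Q₁, hQ₁d, hQ₁b, hQ₁e₁, hQ₁e₂, hQ₁e₃⟩ := exists_bump hs hd α₁ α₂ α₃ h₁ h12 h13
  obtain ⟨Q₂, hQ₂d, hQ₂b, hQ₂e₂, hQ₂e₁, hQ₂e₃⟩ :=
    exists_bump hs hd α₂ α₁ α₃ h₂ (Ne.symm h12) h23
  obtain ⟨Q₃, hQ₃d, hQ₃b, hQ₃e₃, hQ₃e₁, hQ₃e₂⟩ :=
    exists_bump hs hd α₃ α₁ α₂ h₃ (Ne.symm h13) (Ne.symm h23)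
  have hsm : ∀ (c : F) (Q : MvPolynomial (Fin s) F) (i : Fin s),
      degreeOf i (c • Q) ≤ degreeOf i Q := fun c Q i => by
    rw [smul_eq_C_mul]
    simpa using degreeOf_mul_le i (C c) Q
  set N : MvPolynomial (Fin s) F → F → F → F → MvPolynomial (Fin s) F :=
    fun P c₁ c₂ c₃ => P + c₁ • Q₁ + c₂ • Q₂ + c₃ • Q₃ with hN
  have hdeg : ∀ P c₁ c₂ c₃, (∀ i, degreeOf i P ≤ d) →
      ∀ i, degreeOf i (N P c₁ c₂ c₃) ≤ d := by
    intro P c₁ c₂ c₃ hP i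
    have g1 := degreeOf_add_le i P (c₁ • Q₁)
    have g2 := degreeOf_add_le i (P + c₁ • Q₁) (c₂ • Q₂)
    have g3 := degreeOf_add_le i (P + c₁ • Q₁ + c₂ • Q₂) (c₃ • Q₃)
    have k1 := hsm c₁ Q₁ i
    have k2 := hsm c₂ Q₂ i
    have k3 := hsm c₃ Q₃ i
    have := hP i
    have := hQ₁d i
    have := hQ₂d i
    have := hQ₃d i
    simp only [hN]
    omega
  have hev : ∀ (x : Fin s → F) P c₁ c₂ c₃, eval x (N P c₁ c₂ c₃)
      = eval x P + c₁ * eval x Q₁ + c₂ * eval x Q₂ + c₃ * eval x Q₃ := by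
    intro x P c₁ c₂ c₃
    simp [hN, smul_eval]
  have e : {P : MvPolynomial (Fin s) F //
        (∀ i, P.degreeOf i ≤ d) ∧
        (∀ b : Fin s → Bool, eval (fun i => if b i then (1 : F) else 0) P = A b)} ≃
      {P : MvPolynomial (Fin s) F //
        ((∀ i, P.degreeOf i ≤ d) ∧
          (∀ b : Fin s → Bool, eval (fun i => if b i then (1 : F) else 0) P = A b)) ∧
        eval α₁ P = w₁ ∧ eval α₂ P = w₂ ∧ eval α₃ P = w₃} × (F × F × F) :=
    { toFun := fun P =>
        (⟨N P.1 (w₁ - eval α₁ P.1) (w₂ - eval α₂ P.1) (w₃ - eval α₃ P.1),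
          ⟨⟨hdeg _ _ _ _ P.2.1, fun b => by
              rw [hev]; rw [hQ₁b b, hQ₂b b, hQ₃b b, P.2.2 b]; ring⟩,
            by rw [hev, hQ₁e₁, hQ₂e₁, hQ₃e₁]; ring,
            by rw [hev, hQ₁e₂, hQ₂e₂, hQ₃e₂]; ring,
            by rw [hev, hQ₁e₃, hQ₂e₃, hQ₃e₃]; ring⟩⟩,
          (eval α₁ P.1, eval α₂ P.1, eval α₃ P.1)),
      invFun := fun Pc =>
        ⟨N Pc.1.1 (Pc.2.1 - w₁) (Pc.2.2.1 - w₂) (Pc.2.2.2 - w₃),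
          hdeg _ _ _ _ Pc.1.2.1.1, fun b => by
            rw [hev]; rw [hQ₁b b, hQ₂b b, hQ₃b b, Pc.1.2.1.2 b]; ring⟩,
      left_inv := fun P => by
        apply Subtype.ext
        simp only [hN, smul_eq_C_mul, map_sub]
        ring,
      right_inv := fun Pc => by
        obtain ⟨⟨P, hP⟩, c₁, c₂, c₃⟩ := Pc
        have he₁ : eval α₁ (N P (c₁ - w₁) (c₂ - w₂) (c₃ - w₃)) = c₁ := by
          rw [hev, hP.2.1, hQ₁e₁, hQ₂e₁, hQ₃e₁]; ring
        have he₂ : eval α₂ (N P (c₁ - w₁) (c₂ - w₂) (c₃ - w₃)) = c₂ := by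
          rw [hev, hP.2.2.1, hQ₁e₂, hQ₂e₂, hQ₃e₂]; ring
        have he₃ : eval α₃ (N P (c₁ - w₁) (c₂ - w₂) (c₃ - w₃)) = c₃ := by
          rw [hev, hP.2.2.2, hQ₁e₃, hQ₂e₃, hQ₃e₃]; ring
        refine Prod.ext (Subtype.ext ?_) ?_
        · show N (N P _ _ _) _ _ _ = P
          rw [he₁, he₂, he₃]
          simp only [hN, smul_eq_C_mul, map_sub]
          ring
        · show (_, _, _) = (c₁, c₂, c₃)
          rw [he₁, he₂, he₃] }
  rw [Nat.card_congr e, Nat.card_prod]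
  congr 1
  simp [Nat.card_eq_fintype_card]
  ring
end
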